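/- arXiv:2308.16899 — 12 statements merged into one kernel-verified Lean document; each statement's English description precedes it below -/
import Mathlib

section
/- Let a, b, z', z'', ρ', ρ'' be real numbers with a ≥ b ≥ 0, z' > 0, z'' > 0, ρ' ≥ 3, ρ'' ≥ 3, and ρ'·z'' = ρ''·z'. Then (a + √z'·(√ρ' + 1/√ρ') + √z''·(√ρ'' + 1/√ρ''))/(b + √z' + √z'') ≤ (a + √(z' + z'')·(√(ρ' + ρ'') + 1/√(ρ' + ρ'')))/(b + √(z' + z'')). -/
private lemma aux_ge173 (x : ℝ) (hx : 0 < x) (h3 : 3 ≤ x ^ 2) : (1.73 : ℝ) ≤ x := by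
  nlinarith

private lemma aux_xy (x y : ℝ) (hx : 0 < x) (hy : 0 < y) (hx3 : 3 ≤ x ^ 2)
    (hy3 : 3 ≤ y ^ 2) : 3 ≤ x * y := by
  nlinarith [mul_pos hx hy]

private lemma aux_key (x y : ℝ) (hx : 0 < x) (hy : 0 < y) (hx3 : 3 ≤ x ^ 2)
    (hy3 : 3 ≤ y ^ 2) : 0 ≤ 2 * (x * y) - 2 * x - 2 * y + 1 := by
  have h1 := aux_ge173 x hx hx3
  have h2 := aux_ge173 y hy hy3
  nlinarith [mul_nonneg (by linarith : (0:ℝ) ≤ x - 1.73) (by linarith : (0:ℝ) ≤ y - 1.73)]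

private lemma aux_L2 (x y q : ℝ) (hx : 0 < x) (hy : 0 < y) (hq : 0 < q)
    (hx3 : 3 ≤ x ^ 2) (hy3 : 3 ≤ y ^ 2) (hq2 : q ^ 2 = x ^ 2 + y ^ 2) :
    (x ^ 2 + y ^ 2 + 2) * q ≤ (x ^ 2 + y ^ 2 + 1) * (x + y) := by
  have hxy := aux_xy x y hx hy hx3 hy3
  have hsq : ((x ^ 2 + y ^ 2 + 2) * q) ^ 2 ≤ ((x ^ 2 + y ^ 2 + 1) * (x + y)) ^ 2 := by
    nlinarith [mul_nonneg (by linarith : (0:ℝ) ≤ x * y - 3) (sq_nonneg (x ^ 2 + y ^ 2 + 1)),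
      sq_nonneg (x ^ 2 + y ^ 2), hq2]
  have hB0 : 0 ≤ (x ^ 2 + y ^ 2 + 2) * q := by positivity
  have hA0 : 0 ≤ (x ^ 2 + y ^ 2 + 1) * (x + y) := by positivity
  have := Real.sqrt_le_sqrt hsq
  rwa [Real.sqrt_sq hB0, Real.sqrt_sq hA0] at this

private lemma aux_main (a b x y q h : ℝ) (hab : a ≥ b) (hb : 0 ≤ b)
    (hx0 : 0 < x) (hy0 : 0 < y) (hq0 : 0 < q) (hh0 : 0 < h)
    (hx3 : 3 ≤ x ^ 2) (hy3 : 3 ≤ y ^ 2) (hq2 : q ^ 2 = x ^ 2 + y ^ 2) :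
    (a + (x ^ 2 + 1) * h + (y ^ 2 + 1) * h) / (b + x * h + y * h)
      ≤ (a + (q ^ 2 + 1) * h) / (b + q * h) := by
  have ha0 : 0 ≤ a := le_trans hb hab
  have hkey := aux_key x y hx0 hy0 hx3 hy3
  have hL1 : q ≤ x + y - 1 := by
    nlinarith [sq_nonneg (x + y - 1 - q), sq_nonneg (x + y - 1 + q)]
  have hL2 := aux_L2 x y q hx0 hy0 hq0 hx3 hy3 hq2
  have hd1 : 0 < b + x * h + y * h := by positivity
  have hd2 : 0 < b + q * h := by positivity
  rw [hq2, div_le_div_iff₀ hd1 hd2]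
  nlinarith [mul_nonneg (mul_nonneg hh0.le ha0) (by linarith : (0:ℝ) ≤ x + y - q - 1),
    mul_nonneg hh0.le (by linarith : (0:ℝ) ≤ a - b),
    mul_nonneg (mul_nonneg hh0.le hh0.le)
      (by linarith : (0:ℝ) ≤ (x ^ 2 + y ^ 2 + 1) * (x + y) - (x ^ 2 + y ^ 2 + 2) * q)]

theorem merge_two_flat_rectangles
    (a b z' z'' ρ' ρ'' : ℝ)
    (hab : a ≥ b) (hb : b ≥ 0)
    (hz' : 0 < z') (hz'' : 0 < z'')
    (hρ' : ρ' ≥ 3) (hρ'' : ρ'' ≥ 3)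
    (heq : ρ' * z'' = ρ'' * z') :
    (a + Real.sqrt z' * (Real.sqrt ρ' + 1 / Real.sqrt ρ')
       + Real.sqrt z'' * (Real.sqrt ρ'' + 1 / Real.sqrt ρ''))
      / (b + Real.sqrt z' + Real.sqrt z'')
      ≤ (a + Real.sqrt (z' + z'') * (Real.sqrt (ρ' + ρ'') + 1 / Real.sqrt (ρ' + ρ'')))
          / (b + Real.sqrt (z' + z'')) := by
  have hρ'0 : (0:ℝ) < ρ' := by linarith
  have hρ''0 : (0:ℝ) < ρ'' := by linarith
  set x := Real.sqrt ρ' with hx_def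
  set y := Real.sqrt ρ'' with hy_def
  set q := Real.sqrt (ρ' + ρ'') with hq_def
  have hx0 : 0 < x := Real.sqrt_pos.mpr hρ'0
  have hy0 : 0 < y := Real.sqrt_pos.mpr hρ''0
  have hq0 : 0 < q := Real.sqrt_pos.mpr (by linarith)
  have hx2 : x ^ 2 = ρ' := Real.sq_sqrt hρ'0.le
  have hy2 : y ^ 2 = ρ'' := Real.sq_sqrt hρ''0.le
  have hq2 : q ^ 2 = x ^ 2 + y ^ 2 := by
    rw [hx2, hy2]; exact Real.sq_sqrt (by linarith)
  have hx3 : (3:ℝ) ≤ x ^ 2 := by rw [hx2]; exact hρ'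
  have hy3 : (3:ℝ) ≤ y ^ 2 := by rw [hy2]; exact hρ''
  set h := Real.sqrt z' / x with hh_def
  have hh0 : 0 < h := div_pos (Real.sqrt_pos.mpr hz') hx0
  have hsz' : Real.sqrt z' = x * h := by rw [hh_def]; field_simp
  have hh2 : h ^ 2 = z' / ρ' := by
    rw [hh_def, div_pow, Real.sq_sqrt hz'.le, hx2]
  have hsz'' : Real.sqrt z'' = y * h := by
    have e : z'' = (y * h) ^ 2 := by
      rw [mul_pow, hy2, hh2]
      field_simp
      nlinarith [heq]
    rw [e, Real.sqrt_sq (by positivity)]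
  have hszz : Real.sqrt (z' + z'') = q * h := by
    have e : z' + z'' = (q * h) ^ 2 := by
      rw [mul_pow, hq2, hx2, hy2, hh2]
      field_simp
      nlinarith [heq]
    rw [e, Real.sqrt_sq (by positivity)]
  rw [hsz', hsz'', hszz]
  have e1 : x * h * (x + 1 / x) = (x ^ 2 + 1) * h := by field_simp
  have e2 : y * h * (y + 1 / y) = (y ^ 2 + 1) * h := by field_simp
  have e3 : q * h * (q + 1 / q) = (q ^ 2 + 1) * h := by field_simp
  rw [e1, e2, e3]
  have goal := aux_main a b x y q h hab hb hx0 hy0 hq0 hh0 hx3 hy3 hq2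
  calc (a + (x ^ 2 + 1) * h + (y ^ 2 + 1) * h) / (b + x * h + y * h)
      ≤ (a + (q ^ 2 + 1) * h) / (b + q * h) := goal
end

section
/- Let ρ, t, z be real numbers satisfying 1 ≤ ρ ≤ 3, z ≥ 0.01, z ≤ ρ·t²/3, 1/(3ρ) ≤ t ≤ 1/ρ, and 1 − t ≥ t − z. Then (√ρ + t·√ρ + 2/√ρ + 1.5·z/(√ρ·t)) / (2·(√(t − z) + √z + √(1 − t))) ≤ 1.19. -/
open Real

/-- chord inequality for sqrt (concavity): for 0 ≤ p ≤ z ≤ q,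
    (q-z)√p + (z-p)√q ≤ (q-p)√z -/
lemma sqrt_chord (p z q : ℝ) (hp : 0 ≤ p) (hpz : p ≤ z) (hzq : z ≤ q) :
    (q - z) * Real.sqrt p + (z - p) * Real.sqrt q ≤ (q - p) * Real.sqrt z := by
  have hz : 0 ≤ z := le_trans hp hpz
  have hq : 0 ≤ q := le_trans hz hzq
  have a2 := Real.sq_sqrt hp
  have b2 := Real.sq_sqrt hq
  have c2 := Real.sq_sqrt hz
  have ha := Real.sqrt_nonneg p
  have hb := Real.sqrt_nonneg q
  have hc := Real.sqrt_nonneg z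
  have hac : Real.sqrt p ≤ Real.sqrt z := Real.sqrt_le_sqrt hpz
  have hcb : Real.sqrt z ≤ Real.sqrt q := Real.sqrt_le_sqrt hzq
  nlinarith [mul_nonneg (mul_nonneg (sub_nonneg.2 (le_trans hac hcb)) (sub_nonneg.2 hcb))
    (sub_nonneg.2 hac)]

/-- chord inequality for 1/t (convexity): for 0 < p ≤ t ≤ q,
    (q-p)/t ≤ (q-t)/p + (t-p)/q -/
lemma inv_chord (p t q : ℝ) (hp : 0 < p) (hpt : p ≤ t) (htq : t ≤ q) :
    (q - p) / t ≤ (q - t) / p + (t - p) / q := by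
  have ht : 0 < t := lt_of_lt_of_le hp hpt
  have hq : 0 < q := lt_of_lt_of_le ht htq
  rw [div_add_div _ _ (ne_of_gt hp) (ne_of_gt hq), div_le_div_iff₀ ht (by positivity)]
  nlinarith [mul_nonneg (sub_nonneg.2 hpt) (sub_nonneg.2 htq)]

/-- tangent inequality for 1/t: (2m - t)/m^2 ≤ 1/t -/
lemma inv_tangent (m t : ℝ) (hm : 0 < m) (ht : 0 < t) :
    (2 * m - t) / m ^ 2 ≤ 1 / t := by
  rw [div_le_div_iff₀ (by positivity) ht]
  nlinarith [sq_nonneg (t - m)]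

lemma sqrt_ge (x b : ℝ) (hb : 0 ≤ b) (h : b ^ 2 ≤ x) : b ≤ Real.sqrt x := by
  rcases le_or_gt b 0 with h0 | h0
  · exact le_trans h0 (Real.sqrt_nonneg x)
  · exact (Real.le_sqrt' h0).2 h

lemma sqrt_le (x b : ℝ) (hb : 0 ≤ b) (h : x ≤ b ^ 2) : Real.sqrt x ≤ b := by
  calc Real.sqrt x ≤ Real.sqrt (b ^ 2) := Real.sqrt_le_sqrt h
  _ = b := Real.sqrt_sq hb

/-- rational corner check lifted to real √ρ ∈ [sL,sU] : fixed point (T,e) -/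
lemma check_pt (ρ sL sU T e a b c : ℝ)
    (hsL1 : 1 ≤ sL) (hsL : sL ^ 2 ≤ ρ) (hsU : ρ ≤ sU ^ 2) (hsU0 : 0 ≤ sU)
    (hT : 0 < T) (he : 0 ≤ e)
    (ha : a ^ 2 ≤ T - e) (ha0 : 0 ≤ a) (hb : b ^ 2 ≤ e) (hb0 : 0 ≤ b)
    (hc : c ^ 2 ≤ 1 - T) (hc0 : 0 ≤ c)
    (key : sU * (1 + T) + 2 / sL + 3 / (2 * sL * T) * e ≤ 119 / 50 * (a + b + c)) :
    Real.sqrt ρ * (1 + T) + 2 / Real.sqrt ρ + 3 / (2 * Real.sqrt ρ * T) * e ≤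
      119 / 50 * (Real.sqrt (T - e) + Real.sqrt e + Real.sqrt (1 - T)) := by
  have hsLpos : (0:ℝ) < sL := lt_of_lt_of_le one_pos hsL1
  have hsl : sL ≤ Real.sqrt ρ := sqrt_ge ρ sL (le_of_lt hsLpos) hsL
  have hsu : Real.sqrt ρ ≤ sU := sqrt_le ρ sU hsU0 hsU
  have hspos : (0:ℝ) < Real.sqrt ρ := lt_of_lt_of_le hsLpos hsl
  have h1 : Real.sqrt ρ * (1 + T) ≤ sU * (1 + T) :=
    mul_le_mul_of_nonneg_right hsu (by linarith)
  have h2 : 2 / Real.sqrt ρ ≤ 2 / sL := by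
    apply div_le_div_of_nonneg_left (by norm_num) hsLpos hsl
  have h3 : 3 / (2 * Real.sqrt ρ * T) * e ≤ 3 / (2 * sL * T) * e := by
    apply mul_le_mul_of_nonneg_right _ he
    apply div_le_div_of_nonneg_left (by norm_num) (by positivity)
    nlinarith
  have r1 : a ≤ Real.sqrt (T - e) := sqrt_ge _ a ha0 ha
  have r2 : b ≤ Real.sqrt e := sqrt_ge _ b hb0 hb
  have r3 : c ≤ Real.sqrt (1 - T) := sqrt_ge _ c hc0 hc
  linarith

/-- B-form corner check (t-endpoint for region B, with tangent linearization of 1/t) -/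
lemma check_ptB (ρ sL sU T m c d : ℝ)
    (hsL1 : 1 ≤ sL) (hsL : sL ^ 2 ≤ ρ) (hsU : ρ ≤ sU ^ 2) (hsU0 : 0 < sU)
    (hT : 0 < T) (hm : 0 < m) (hmT : T ≤ 2 * m)
    (hc : c ^ 2 ≤ 1 - T) (hc0 : 0 ≤ c) (hd : d ^ 2 ≤ 2 * T - 1) (hd0 : 0 ≤ d)
    (key : sU * (1 + T) + 5 / sL - 3 / (2 * sU) * ((2 * m - T) / m ^ 2) ≤
      119 / 50 * (2 * c + d)) :
    Real.sqrt ρ * (1 + T) + 5 / Real.sqrt ρ - 3 / (2 * Real.sqrt ρ) * ((2 * m - T) / m ^ 2) ≤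
      119 / 50 * (2 * Real.sqrt (1 - T) + Real.sqrt (2 * T - 1)) := by
  have hsLpos : (0:ℝ) < sL := lt_of_lt_of_le one_pos hsL1
  have hsl : sL ≤ Real.sqrt ρ := sqrt_ge ρ sL (le_of_lt hsLpos) hsL
  have hsu : Real.sqrt ρ ≤ sU := sqrt_le ρ sU (le_of_lt hsU0) hsU
  have hspos : (0:ℝ) < Real.sqrt ρ := lt_of_lt_of_le hsLpos hsl
  have h1 : Real.sqrt ρ * (1 + T) ≤ sU * (1 + T) :=
    mul_le_mul_of_nonneg_right hsu (by linarith)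
  have h2 : 5 / Real.sqrt ρ ≤ 5 / sL :=
    div_le_div_of_nonneg_left (by norm_num) hsLpos hsl
  have hw : 0 ≤ (2 * m - T) / m ^ 2 := div_nonneg (by linarith) (by positivity)
  have h3 : 3 / (2 * sU) * ((2 * m - T) / m ^ 2) ≤
      3 / (2 * Real.sqrt ρ) * ((2 * m - T) / m ^ 2) := by
    apply mul_le_mul_of_nonneg_right _ hw
    apply div_le_div_of_nonneg_left (by norm_num) (by positivity)
    linarith
  have r1 : c ≤ Real.sqrt (1 - T) := sqrt_ge _ c hc0 hc
  have r2 : d ≤ Real.sqrt (2 * T - 1) := sqrt_ge _ d hd0 hd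
  linarith

/-- t-interval reduction for fixed z = e (concavity in t): -/
lemma claimA_t (ρ t T1 T2 e : ℝ)
    (hρ : 1 ≤ ρ) (hT1 : T1 ≤ t) (hT2 : t ≤ T2) (hT1p : 0 < T1) (hT21 : T2 ≤ 1)
    (he : 0 ≤ e) (heT : e ≤ T1)
    (h1 : Real.sqrt ρ * (1 + T1) + 2 / Real.sqrt ρ + 3 / (2 * Real.sqrt ρ * T1) * e ≤
      119 / 50 * (Real.sqrt (T1 - e) + Real.sqrt e + Real.sqrt (1 - T1)))
    (h2 : Real.sqrt ρ * (1 + T2) + 2 / Real.sqrt ρ + 3 / (2 * Real.sqrt ρ * T2) * e ≤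
      119 / 50 * (Real.sqrt (T2 - e) + Real.sqrt e + Real.sqrt (1 - T2))) :
    Real.sqrt ρ * (1 + t) + 2 / Real.sqrt ρ + 3 / (2 * Real.sqrt ρ * t) * e ≤
      119 / 50 * (Real.sqrt (t - e) + Real.sqrt e + Real.sqrt (1 - t)) := by
  have hs : (0:ℝ) < Real.sqrt ρ := Real.sqrt_pos.2 (by linarith)
  rcases eq_or_lt_of_le (le_trans hT1 hT2) with heq | hlt
  · have ht1 : t = T1 := le_antisymm (heq ▸ hT2) hT1
    subst ht1; exact h1
  · have hΔ : (0:ℝ) < T2 - T1 := by linarith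
    have ht0 : (0:ℝ) < t := lt_of_lt_of_le hT1p hT1
    have invc := inv_chord T1 t T2 hT1p hT1 hT2
    have f3 : 3 / (2 * Real.sqrt ρ * t) * e * (T2 - T1) ≤
        (T2 - t) * (3 / (2 * Real.sqrt ρ * T1) * e) + (t - T1) * (3 / (2 * Real.sqrt ρ * T2) * e) := by
      have hco : (0:ℝ) ≤ 3 * e / (2 * Real.sqrt ρ) := by positivity
      have := mul_le_mul_of_nonneg_left invc hco
      have e1 : 3 * e / (2 * Real.sqrt ρ) * ((T2 - T1) / t) =
          3 / (2 * Real.sqrt ρ * t) * e * (T2 - T1) := by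
        ring
      have e2 : 3 * e / (2 * Real.sqrt ρ) * ((T2 - t) / T1 + (t - T1) / T2) =
          (T2 - t) * (3 / (2 * Real.sqrt ρ * T1) * e) + (t - T1) * (3 / (2 * Real.sqrt ρ * T2) * e) := by
        ring
      rw [e1, e2] at this; exact this
    have chorda : (T2 - t) * Real.sqrt (T1 - e) + (t - T1) * Real.sqrt (T2 - e) ≤
        (T2 - T1) * Real.sqrt (t - e) := by
      have h := sqrt_chord (T1 - e) (t - e) (T2 - e) (by linarith) (by linarith) (by linarith)
      have c1 : T2 - e - (t - e) = T2 - t := by ring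
      have c2 : t - e - (T1 - e) = t - T1 := by ring
      have c3 : T2 - e - (T1 - e) = T2 - T1 := by ring
      rw [c1, c2, c3] at h; exact h
    have chordc : (T2 - t) * Real.sqrt (1 - T1) + (t - T1) * Real.sqrt (1 - T2) ≤
        (T2 - T1) * Real.sqrt (1 - t) := by
      have h := sqrt_chord (1 - T2) (1 - t) (1 - T1) (by linarith) (by linarith) (by linarith)
      have c1 : 1 - T1 - (1 - t) = t - T1 := by ring
      have c2 : 1 - t - (1 - T2) = T2 - t := by ring
      have c3 : 1 - T1 - (1 - T2) = T2 - T1 := by ring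
      rw [c1, c2, c3] at h; linarith
    have s1 := mul_le_mul_of_nonneg_left h1 (show (0:ℝ) ≤ T2 - t by linarith)
    have s2 := mul_le_mul_of_nonneg_left h2 (show (0:ℝ) ≤ t - T1 by linarith)
    have big : (T2 - T1) * (Real.sqrt ρ * (1 + t) + 2 / Real.sqrt ρ + 3 / (2 * Real.sqrt ρ * t) * e) ≤
        (T2 - T1) * (119 / 50 * (Real.sqrt (t - e) + Real.sqrt e + Real.sqrt (1 - t))) := by
      have idL : (T2 - T1) * (Real.sqrt ρ * (1 + t) + 2 / Real.sqrt ρ) =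
          (T2 - t) * (Real.sqrt ρ * (1 + T1) + 2 / Real.sqrt ρ) +
          (t - T1) * (Real.sqrt ρ * (1 + T2) + 2 / Real.sqrt ρ) := by ring
      linarith [idL, f3, chorda, chordc, s1, s2]
    exact le_of_mul_le_mul_left big hΔ

/-- t-interval reduction along the curve z = 2t-1 (region B) -/
lemma claimB_t (ρ t T1 T2 m : ℝ)
    (hρ : 1 ≤ ρ) (hT1 : T1 ≤ t) (hT2 : t ≤ T2) (hT1p : 101 / 200 ≤ T1) (hT21 : T2 ≤ 1)
    (hm : m = (T1 + T2) / 2)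
    (hG1 : Real.sqrt ρ * (1 + T1) + 5 / Real.sqrt ρ - 3 / (2 * Real.sqrt ρ) * ((2 * m - T1) / m ^ 2) ≤
      119 / 50 * (2 * Real.sqrt (1 - T1) + Real.sqrt (2 * T1 - 1)))
    (hG2 : Real.sqrt ρ * (1 + T2) + 5 / Real.sqrt ρ - 3 / (2 * Real.sqrt ρ) * ((2 * m - T2) / m ^ 2) ≤
      119 / 50 * (2 * Real.sqrt (1 - T2) + Real.sqrt (2 * T2 - 1))) :
    Real.sqrt ρ * (1 + t) + 2 / Real.sqrt ρ + 3 / (2 * Real.sqrt ρ * t) * (2 * t - 1) ≤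
      119 / 50 * (Real.sqrt (1 - t) + Real.sqrt (2 * t - 1) + Real.sqrt (1 - t)) := by
  have hs : (0:ℝ) < Real.sqrt ρ := Real.sqrt_pos.2 (by linarith)
  have hT1p0 : (0:ℝ) < T1 := by linarith
  have ht0 : (0:ℝ) < t := by linarith
  have hm0 : (0:ℝ) < m := by rw [hm]; linarith
  have idty : 3 / (2 * Real.sqrt ρ * t) * (2 * t - 1) =
      3 / Real.sqrt ρ - 3 / (2 * Real.sqrt ρ) * (1 / t) := by
    field_simp
  have tangent := inv_tangent m t hm0 ht0
  have tsc : 3 / (2 * Real.sqrt ρ) * ((2 * m - t) / m ^ 2) ≤ 3 / (2 * Real.sqrt ρ) * (1 / t) :=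
    mul_le_mul_of_nonneg_left tangent (by positivity)
  have hGt : Real.sqrt ρ * (1 + t) + 2 / Real.sqrt ρ + 3 / (2 * Real.sqrt ρ * t) * (2 * t - 1) ≤
      Real.sqrt ρ * (1 + t) + 5 / Real.sqrt ρ - 3 / (2 * Real.sqrt ρ) * ((2 * m - t) / m ^ 2) := by
    rw [idty]
    have e5 : 2 / Real.sqrt ρ + 3 / Real.sqrt ρ = 5 / Real.sqrt ρ := by ring
    linarith
  rcases eq_or_lt_of_le (le_trans hT1 hT2) with heq | hlt
  · have ht1 : t = T1 := le_antisymm (heq ▸ hT2) hT1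
    subst ht1
    linarith
  · have hΔ : (0:ℝ) < T2 - T1 := by linarith
    have chordc : (T2 - t) * Real.sqrt (1 - T1) + (t - T1) * Real.sqrt (1 - T2) ≤
        (T2 - T1) * Real.sqrt (1 - t) := by
      have h := sqrt_chord (1 - T2) (1 - t) (1 - T1) (by linarith) (by linarith) (by linarith)
      have c1 : 1 - T1 - (1 - t) = t - T1 := by ring
      have c2 : 1 - t - (1 - T2) = T2 - t := by ring
      have c3 : 1 - T1 - (1 - T2) = T2 - T1 := by ring
      rw [c1, c2, c3] at h; linarith
    have chordd : (T2 - t) * Real.sqrt (2 * T1 - 1) + (t - T1) * Real.sqrt (2 * T2 - 1) ≤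
        (T2 - T1) * Real.sqrt (2 * t - 1) := by
      have h := sqrt_chord (2 * T1 - 1) (2 * t - 1) (2 * T2 - 1) (by linarith) (by linarith) (by linarith)
      have c1 : 2 * T2 - 1 - (2 * t - 1) = 2 * (T2 - t) := by ring
      have c2 : 2 * t - 1 - (2 * T1 - 1) = 2 * (t - T1) := by ring
      have c3 : 2 * T2 - 1 - (2 * T1 - 1) = 2 * (T2 - T1) := by ring
      rw [c1, c2, c3] at h; linarith
    have s1 := mul_le_mul_of_nonneg_left hG1 (show (0:ℝ) ≤ T2 - t by linarith)
    have s2 := mul_le_mul_of_nonneg_left hG2 (show (0:ℝ) ≤ t - T1 by linarith)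
    have big : (T2 - T1) * (Real.sqrt ρ * (1 + t) + 5 / Real.sqrt ρ -
        3 / (2 * Real.sqrt ρ) * ((2 * m - t) / m ^ 2)) ≤
        (T2 - T1) * (119 / 50 * (Real.sqrt (1 - t) + Real.sqrt (2 * t - 1) + Real.sqrt (1 - t))) := by
      have idG : (T2 - T1) * (Real.sqrt ρ * (1 + t) + 5 / Real.sqrt ρ -
          3 / (2 * Real.sqrt ρ) * ((2 * m - t) / m ^ 2)) =
          (T2 - t) * (Real.sqrt ρ * (1 + T1) + 5 / Real.sqrt ρ -
            3 / (2 * Real.sqrt ρ) * ((2 * m - T1) / m ^ 2)) +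
          (t - T1) * (Real.sqrt ρ * (1 + T2) + 5 / Real.sqrt ρ -
            3 / (2 * Real.sqrt ρ) * ((2 * m - T2) / m ^ 2)) := by ring
      linarith [idG, chordc, chordd, s1, s2]
    have := le_of_mul_le_mul_left big hΔ
    linarith

/-- z-interval reduction (convexity in z) -/
lemma reduce_z (t z p q N0 N1 C K : ℝ)
    (hK : 0 ≤ K) (hp : 0 ≤ p) (hpz : p ≤ z) (hzq : z ≤ q) (hqt : q ≤ t)
    (hp' : N0 + N1 * p ≤ K * (Real.sqrt (t - p) + Real.sqrt p + C))
    (hq' : N0 + N1 * q ≤ K * (Real.sqrt (t - q) + Real.sqrt q + C)) :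
    N0 + N1 * z ≤ K * (Real.sqrt (t - z) + Real.sqrt z + C) := by
  rcases eq_or_lt_of_le (le_trans hpz hzq) with heq | hlt
  · have hz : z = p := le_antisymm (heq ▸ hzq) hpz
    subst hz; exact hp'
  · have hΔ : (0:ℝ) < q - p := by linarith
    have chord1 := sqrt_chord p z q hp hpz hzq
    have chord2 : (z - p) * Real.sqrt (t - q) + (q - z) * Real.sqrt (t - p) ≤
        (q - p) * Real.sqrt (t - z) := by
      have h := sqrt_chord (t - q) (t - z) (t - p) (by linarith) (by linarith) (by linarith)
      have c1 : t - p - (t - z) = z - p := by ring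
      have c2 : t - z - (t - q) = q - z := by ring
      have c3 : t - p - (t - q) = q - p := by ring
      rw [c1, c2, c3] at h; exact h
    have s1 := mul_le_mul_of_nonneg_left hp' (show (0:ℝ) ≤ q - z by linarith)
    have s2 := mul_le_mul_of_nonneg_left hq' (show (0:ℝ) ≤ z - p by linarith)
    have big : (q - p) * (N0 + N1 * z) ≤
        (q - p) * (K * (Real.sqrt (t - z) + Real.sqrt z + C)) := by
      nlinarith [chord1, chord2, s1, s2, mul_le_mul_of_nonneg_left chord1 hK,
        mul_le_mul_of_nonneg_left chord2 hK]
    exact le_of_mul_le_mul_left big hΔ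

lemma tlow (ρ t r2 : ℝ) (h0 : 0 < ρ) (hρ : ρ ≤ r2) (h : 1 / (3 * ρ) ≤ t) : 1 / (3 * r2) ≤ t :=
  le_trans (div_le_div_of_nonneg_left (by norm_num) (by linarith) (by linarith)) h

lemma thigh (ρ t r1 : ℝ) (h0 : 0 < r1) (hρ : r1 ≤ ρ) (h : t ≤ 1 / ρ) : t ≤ 1 / r1 :=
  le_trans h (div_le_div_of_nonneg_left (by norm_num) h0 hρ)

lemma prune1 (ρ t r1 t1 : ℝ) (h0 : 0 < ρ) (hr : r1 ≤ ρ) (ht : t1 ≤ t) (h2 : t ≤ 1 / ρ)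
    (hr1 : 1 ≤ r1) (ht1 : 0 ≤ t1) (key : 1 < r1 * t1) : False := by
  have hρt : ρ * t ≤ 1 := by
    rw [le_div_iff₀ h0] at h2; linarith
  nlinarith [mul_le_mul hr ht ht1 (by linarith : (0:ℝ) ≤ ρ)]

lemma prune2 (ρ t r2 t2 : ℝ) (h0 : 0 < ρ) (hr : ρ ≤ r2) (htc : t ≤ t2) (h1 : 1 / (3 * ρ) ≤ t)
    (ht0 : 0 ≤ t) (key : r2 * t2 < 1 / 3) : False := by
  have h3 : 1 ≤ t * (3 * ρ) := by
    rw [div_le_iff₀ (by linarith)] at h1; linarith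
  nlinarith [mul_le_mul hr htc ht0 (by linarith : (0:ℝ) ≤ r2)]

lemma prune3 (ρ t z r2 t2 : ℝ) (h0 : 0 < ρ) (hr : ρ ≤ r2) (htc : t ≤ t2) (ht0 : 0 ≤ t)
    (hz : z ≥ 0.01) (hzρ : z ≤ ρ * t ^ 2 / 3) (key : r2 * t2 ^ 2 < 3 / 100) : False := by
  have ht2 : t ^ 2 ≤ t2 ^ 2 := by nlinarith
  have : ρ * t ^ 2 ≤ r2 * t2 ^ 2 := by nlinarith
  have hz' : (0.01 : ℝ) = 1 / 100 := by norm_num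
  nlinarith

lemma prune4 (ρ t z r2 t1 t2 : ℝ) (h0 : 0 < ρ) (hr : ρ ≤ r2) (h1 : t1 ≤ t) (h2 : t ≤ t2)
    (ht0 : 0 ≤ t) (ht12 : t1 < t2) (hxy : 1 - t ≥ t - z) (hzρ : z ≤ ρ * t ^ 2 / 3)
    (k1 : r2 * t1 ^ 2 / 3 - 2 * t1 + 1 < 0) (k2 : r2 * t2 ^ 2 / 3 - 2 * t2 + 1 < 0) : False := by
  have hf : 0 ≤ r2 * t ^ 2 / 3 - 2 * t + 1 := by nlinarith
  have Phf : 0 ≤ (t2 - t1) * (r2 * t ^ 2 / 3 - 2 * t + 1) :=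
    mul_nonneg (by linarith) hf
  have Pc : 0 ≤ (t - t1) * (t2 - t) * (t2 - t1) * r2 :=
    mul_nonneg (mul_nonneg (mul_nonneg (by linarith) (by linarith)) (by linarith)) (by linarith)
  rcases le_total t ((t1 + t2) / 2) with hc | hc
  · have P1 : 0 < (t2 - t) * (2 * t1 - 1 - r2 * t1 ^ 2 / 3) :=
      mul_pos (by linarith) (by linarith)
    have c2 : 0 ≤ (t - t1) * (2 * t2 - 1 - r2 * t2 ^ 2 / 3) :=
      mul_nonneg (by linarith) (by linarith)
    linarith [Phf, P1, c2, Pc]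
  · have P2 : 0 < (t - t1) * (2 * t2 - 1 - r2 * t2 ^ 2 / 3) :=
      mul_pos (by linarith) (by linarith)
    have c1 : 0 ≤ (t2 - t) * (2 * t1 - 1 - r2 * t1 ^ 2 / 3) :=
      mul_nonneg (by linarith) (by linarith)
    linarith [Phf, P2, c1, Pc]

set_option maxHeartbeats 1000000 in
lemma cellA (ρ t z r1 r2 T1 T2 q sL sU aP1 c1 aP2 c2 aQ1 aQ2 bQ : ℝ)
    (hρ1 : 1 ≤ ρ) (ht0 : 0 < t) (hz : z ≥ 0.01) (hzρ : z ≤ ρ * t ^ 2 / 3)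
    (hr1 : r1 ≤ ρ) (hr2 : ρ ≤ r2) (hT1 : T1 ≤ t) (hT2 : t ≤ T2)
    (hnum : 1 ≤ sL ∧ sL ^ 2 ≤ r1 ∧ r2 ≤ sU ^ 2 ∧ 0 ≤ sU ∧ 0 < T1 ∧ T2 ≤ 1 ∧
      r2 * T2 ^ 2 / 3 ≤ q ∧ q ≤ T1 ∧ 0 ≤ q ∧
      aP1 ^ 2 ≤ T1 - 1 / 100 ∧ 0 ≤ aP1 ∧ c1 ^ 2 ≤ 1 - T1 ∧ 0 ≤ c1 ∧
      aP2 ^ 2 ≤ T2 - 1 / 100 ∧ 0 ≤ aP2 ∧ c2 ^ 2 ≤ 1 - T2 ∧ 0 ≤ c2 ∧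
      aQ1 ^ 2 ≤ T1 - q ∧ 0 ≤ aQ1 ∧ aQ2 ^ 2 ≤ T2 - q ∧ 0 ≤ aQ2 ∧ bQ ^ 2 ≤ q ∧ 0 ≤ bQ ∧
      (sU * (1 + T1) + 2 / sL + 3 / (2 * sL * T1) * (1 / 100) ≤ 119 / 50 * (aP1 + 1 / 10 + c1)) ∧
      (sU * (1 + T2) + 2 / sL + 3 / (2 * sL * T2) * (1 / 100) ≤ 119 / 50 * (aP2 + 1 / 10 + c2)) ∧
      (sU * (1 + T1) + 2 / sL + 3 / (2 * sL * T1) * q ≤ 119 / 50 * (aQ1 + bQ + c1)) ∧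
      (sU * (1 + T2) + 2 / sL + 3 / (2 * sL * T2) * q ≤ 119 / 50 * (aQ2 + bQ + c2))) :
    Real.sqrt ρ + t * Real.sqrt ρ + 2 / Real.sqrt ρ + 1.5 * z / (Real.sqrt ρ * t) ≤
      119 / 50 * (Real.sqrt (t - z) + Real.sqrt z + Real.sqrt (1 - t)) := by
  obtain ⟨hsL1, hsL, hsU, hsU0, hT1p, hT21, hqr, hqT1, hq0,
    haP1, haP10, hc1, hc10, haP2, haP20, hc2, hc20,
    haQ1, haQ10, haQ2, haQ20, hbQ, hbQ0, key1, key2, key3, key4⟩ := hnum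
  have hρL : sL ^ 2 ≤ ρ := le_trans hsL hr1
  have hρU : ρ ≤ sU ^ 2 := le_trans hr2 hsU
  have hT2p : 0 < T2 := lt_of_lt_of_le hT1p (le_trans hT1 hT2)
  have cp1 := check_pt ρ sL sU T1 (1 / 100) aP1 (1 / 10) c1 hsL1 hρL hρU hsU0 hT1p
    (by norm_num) haP1 haP10 (by norm_num) (by norm_num) hc1 hc10 key1
  have cp2 := check_pt ρ sL sU T2 (1 / 100) aP2 (1 / 10) c2 hsL1 hρL hρU hsU0 hT2p
    (by norm_num) haP2 haP20 (by norm_num) (by norm_num) hc2 hc20 key2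
  have cq1 := check_pt ρ sL sU T1 q aQ1 bQ c1 hsL1 hρL hρU hsU0 hT1p hq0
    haQ1 haQ10 hbQ hbQ0 hc1 hc10 key3
  have cq2 := check_pt ρ sL sU T2 q aQ2 bQ c2 hsL1 hρL hρU hsU0 hT2p hq0
    haQ2 haQ20 hbQ hbQ0 hc2 hc20 key4
  have heT1 : (1:ℝ) / 100 ≤ T1 := by linarith [sq_nonneg aP1, haP1]
  have hA := claimA_t ρ t T1 T2 (1 / 100) hρ1 hT1 hT2 hT1p hT21 (by norm_num) heT1 cp1 cp2
  have hQ := claimA_t ρ t T1 T2 q hρ1 hT1 hT2 hT1p hT21 hq0 hqT1 cq1 cq2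
  have hzq : z ≤ q := by
    have h1 : t ^ 2 ≤ T2 ^ 2 := pow_le_pow_left₀ (le_of_lt ht0) hT2 2
    have h2 : ρ * t ^ 2 ≤ r2 * T2 ^ 2 :=
      mul_le_mul hr2 h1 (sq_nonneg t) (by linarith)
    linarith
  have hz' : (1:ℝ) / 100 ≤ z := by
    have : (0.01:ℝ) = 1 / 100 := by norm_num
    linarith [hz, this.symm.le]
  have final := reduce_z t z (1 / 100) q (Real.sqrt ρ * (1 + t) + 2 / Real.sqrt ρ)
    (3 / (2 * Real.sqrt ρ * t)) (Real.sqrt (1 - t)) (119 / 50)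
    (by norm_num) (by norm_num) hz' hzq (le_trans hqT1 hT1) hA hQ
  have hs : (0:ℝ) < Real.sqrt ρ := Real.sqrt_pos.2 (by linarith)
  have hrw : Real.sqrt ρ + t * Real.sqrt ρ + 2 / Real.sqrt ρ + 1.5 * z / (Real.sqrt ρ * t) =
      Real.sqrt ρ * (1 + t) + 2 / Real.sqrt ρ + 3 / (2 * Real.sqrt ρ * t) * z := by
    field_simp
    ring
  rw [hrw]
  exact final

set_option maxHeartbeats 1000000 in
lemma cellB (ρ t z r1 r2 T1 T2 q m sL sU c1 c2 dP1 dP2 aQ1 aQ2 bQ : ℝ)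
    (hρ1 : 1 ≤ ρ) (ht0 : 0 < t) (hz : z ≥ 0.01) (hzρ : z ≤ ρ * t ^ 2 / 3)
    (hxy : 1 - t ≥ t - z)
    (hr1 : r1 ≤ ρ) (hr2 : ρ ≤ r2) (hT1 : T1 ≤ t) (hT2 : t ≤ T2)
    (hnum : 1 ≤ sL ∧ sL ^ 2 ≤ r1 ∧ r2 ≤ sU ^ 2 ∧ 0 < sU ∧ 101 / 200 ≤ T1 ∧ T2 ≤ 1 ∧
      r2 * T2 ^ 2 / 3 ≤ q ∧ q ≤ T1 ∧ 0 ≤ q ∧ m = (T1 + T2) / 2 ∧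
      c1 ^ 2 ≤ 1 - T1 ∧ 0 ≤ c1 ∧ c2 ^ 2 ≤ 1 - T2 ∧ 0 ≤ c2 ∧
      dP1 ^ 2 ≤ 2 * T1 - 1 ∧ 0 ≤ dP1 ∧ dP2 ^ 2 ≤ 2 * T2 - 1 ∧ 0 ≤ dP2 ∧
      aQ1 ^ 2 ≤ T1 - q ∧ 0 ≤ aQ1 ∧ aQ2 ^ 2 ≤ T2 - q ∧ 0 ≤ aQ2 ∧ bQ ^ 2 ≤ q ∧ 0 ≤ bQ ∧
      (sU * (1 + T1) + 5 / sL - 3 / (2 * sU) * ((2 * m - T1) / m ^ 2) ≤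
        119 / 50 * (2 * c1 + dP1)) ∧
      (sU * (1 + T2) + 5 / sL - 3 / (2 * sU) * ((2 * m - T2) / m ^ 2) ≤
        119 / 50 * (2 * c2 + dP2)) ∧
      (sU * (1 + T1) + 2 / sL + 3 / (2 * sL * T1) * q ≤ 119 / 50 * (aQ1 + bQ + c1)) ∧
      (sU * (1 + T2) + 2 / sL + 3 / (2 * sL * T2) * q ≤ 119 / 50 * (aQ2 + bQ + c2))) :
    Real.sqrt ρ + t * Real.sqrt ρ + 2 / Real.sqrt ρ + 1.5 * z / (Real.sqrt ρ * t) ≤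
      119 / 50 * (Real.sqrt (t - z) + Real.sqrt z + Real.sqrt (1 - t)) := by
  obtain ⟨hsL1, hsL, hsU, hsU0, hT1p, hT21, hqr, hqT1, hq0, hm,
    hc1, hc10, hc2, hc20, hd1, hd10, hd2, hd20,
    haQ1, haQ10, haQ2, haQ20, hbQ, hbQ0, keyB1, keyB2, key3, key4⟩ := hnum
  have hT1p0 : (0:ℝ) < T1 := by linarith
  have hρL : sL ^ 2 ≤ ρ := le_trans hsL hr1
  have hρU : ρ ≤ sU ^ 2 := le_trans hr2 hsU
  have hT2p : 0 < T2 := lt_of_lt_of_le hT1p0 (le_trans hT1 hT2)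
  have hm0 : 0 < m := by rw [hm]; linarith
  have cb1 := check_ptB ρ sL sU T1 m c1 dP1 hsL1 hρL hρU hsU0 hT1p0 hm0
    (by rw [hm]; linarith [le_trans hT1 hT2]) hc1 hc10 hd1 hd10 keyB1
  have cb2 := check_ptB ρ sL sU T2 m c2 dP2 hsL1 hρL hρU hsU0 hT2p hm0
    (by rw [hm]; linarith [le_trans hT1 hT2]) hc2 hc20 hd2 hd20 keyB2
  have hB := claimB_t ρ t T1 T2 m hρ1 hT1 hT2 hT1p hT21 hm cb1 cb2
  have cq1 := check_pt ρ sL sU T1 q aQ1 bQ c1 hsL1 hρL hρU (le_of_lt hsU0) hT1p0 hq0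
    haQ1 haQ10 hbQ hbQ0 hc1 hc10 key3
  have cq2 := check_pt ρ sL sU T2 q aQ2 bQ c2 hsL1 hρL hρU (le_of_lt hsU0) hT2p hq0
    haQ2 haQ20 hbQ hbQ0 hc2 hc20 key4
  have hQ := claimA_t ρ t T1 T2 q hρ1 hT1 hT2 hT1p0 hT21 hq0 hqT1 cq1 cq2
  have hzq : z ≤ q := by
    have h1 : t ^ 2 ≤ T2 ^ 2 := pow_le_pow_left₀ (le_of_lt ht0) hT2 2
    have h2 : ρ * t ^ 2 ≤ r2 * T2 ^ 2 :=
      mul_le_mul hr2 h1 (sq_nonneg t) (by linarith)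
    linarith
  have hpz : 2 * t - 1 ≤ z := by linarith
  have hp0 : 0 ≤ 2 * t - 1 := by
    have : 101 / 200 ≤ t := le_trans hT1p hT1
    linarith
  have hp' : (Real.sqrt ρ * (1 + t) + 2 / Real.sqrt ρ) + 3 / (2 * Real.sqrt ρ * t) * (2 * t - 1) ≤
      119 / 50 * (Real.sqrt (t - (2 * t - 1)) + Real.sqrt (2 * t - 1) + Real.sqrt (1 - t)) := by
    rw [show t - (2 * t - 1) = 1 - t by ring]
    linarith [hB]
  have final := reduce_z t z (2 * t - 1) q (Real.sqrt ρ * (1 + t) + 2 / Real.sqrt ρ)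
    (3 / (2 * Real.sqrt ρ * t)) (Real.sqrt (1 - t)) (119 / 50)
    (by norm_num) hp0 hpz hzq (le_trans hqT1 hT1) hp' hQ
  have hs : (0:ℝ) < Real.sqrt ρ := Real.sqrt_pos.2 (by linarith)
  have hrw : Real.sqrt ρ + t * Real.sqrt ρ + 2 / Real.sqrt ρ + 1.5 * z / (Real.sqrt ρ * t) =
      Real.sqrt ρ * (1 + t) + 2 / Real.sqrt ρ + 3 / (2 * Real.sqrt ρ * t) * z := by
    field_simp
    ring
  rw [hrw]
  exact final

set_option maxHeartbeats 40000000 in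
theorem case1_1_approx_factor_le
    (ρ t z : ℝ)
    (hρ1 : 1 ≤ ρ) (hρ3 : ρ ≤ 3)
    (hz : z ≥ 0.01) (hzρ : z ≤ ρ * t ^ 2 / 3)
    (ht1 : 1 / (3 * ρ) ≤ t) (ht2 : t ≤ 1 / ρ)
    (hxy : 1 - t ≥ t - z) :
    (Real.sqrt ρ + t * Real.sqrt ρ + 2 / Real.sqrt ρ + 1.5 * z / (Real.sqrt ρ * t))
      / (2 * (Real.sqrt (t - z) + Real.sqrt z + Real.sqrt (1 - t))) ≤ 1.19 := by
  have hρ0 : (0:ℝ) < ρ := by linarith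
  have ht0 : (0:ℝ) < t := lt_of_lt_of_le (by positivity) ht1
  have hzpos : (0:ℝ) < z := lt_of_lt_of_le (by norm_num) hz
  have hD : (0:ℝ) < Real.sqrt (t - z) + Real.sqrt z + Real.sqrt (1 - t) := by
    have h1 : 0 < Real.sqrt z := Real.sqrt_pos.2 hzpos
    have h2 := Real.sqrt_nonneg (t - z)
    have h3 := Real.sqrt_nonneg (1 - t)
    linarith
  have key : Real.sqrt ρ + t * Real.sqrt ρ + 2 / Real.sqrt ρ + 1.5 * z / (Real.sqrt ρ * t) ≤
      119 / 50 * (Real.sqrt (t - z) + Real.sqrt z + Real.sqrt (1 - t)) := by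
    rcases le_total t (101/200) with h0 | h0
    · rcases le_total ρ (2) with h1 | h1
      · rcases le_total t (1109/3600) with h2 | h2
        · rcases le_total ρ (3/2) with h3 | h3
          · rcases le_total ρ (5/4) with h4 | h4
            · exact cellA ρ t z (1) (5/4) (1/(3*(5/4))) (1109/3600) (1229881/31104000) (1) (11181/10000) (2533/5000) (8563/10000) (5459/10000) (4159/5000) (953/2000) (5181/10000) (497/2500) hρ1 ht0 hz hzρ hρ1 h4 (tlow ρ t (5/4) hρ0 h4 ht1) h2 (by norm_num)
            · exact cellA ρ t z (5/4) (3/2) (1/(3*(3/2))) (1109/3600) (1229881/25920000) (559/500) (1531/1250) (2303/5000) (8819/10000) (5459/10000) (4159/5000) (209/500) (319/625) (1089/5000) hρ1 ht0 hz hzρ h4 h3 (tlow ρ t (3/2) hρ0 h3 ht1) h2 (by norm_num)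
          · rcases le_total ρ (7/4) with h5 | h5
            · exact cellA ρ t z (3/2) (7/4) (1/(3*(7/4))) (1109/3600) (8609167/155520000) (12247/10000) (13229/10000) (531/1250) (8997/10000) (5459/10000) (4159/5000) (147/400) (2513/5000) (147/625) hρ1 ht0 hz hzρ h3 h5 (tlow ρ t (7/4) hρ0 h5 ht1) h2 (by norm_num)
            · rcases le_total t (503/2400) with h6 | h6
              · exact cellA ρ t z (7/4) (2) (1/(3*(2))) (503/2400) (253009/8640000) (3307/2500) (14143/10000) (1979/5000) (1141/1250) (4467/10000) (889/1000) (1853/5000) (2123/5000) (1711/10000) hρ1 ht0 hz hzρ h5 h1 (tlow ρ t (2) hρ0 h1 ht1) h6 (by norm_num)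
              · exact cellA ρ t z (7/4) (2) (503/2400) (1109/3600) (1229881/19440000) (3307/2500) (14143/10000) (4467/10000) (889/1000) (5459/10000) (4159/5000) (153/400) (4947/10000) (503/2000) hρ1 ht0 hz hzρ h5 h1 h6 h2 (by norm_num)
        · rcases le_total ρ (3/2) with h7 | h7
          · rcases le_total ρ (5/4) with h8 | h8
            · rcases le_total ρ (9/8) with h9 | h9
              · rcases le_total ρ (17/16) with h10 | h10
                · exact cellA ρ t z (1) (17/16) (1/(3*(17/16))) (101/200) (173417/1920000) (1) (2577/2500) (5511/10000) (2071/2500) (1407/2000) (1407/2000) (2363/5000) (6439/10000) (601/2000) hρ1 ht0 hz hzρ hρ1 h10 (tlow ρ t (17/16) hρ0 h10 ht1) h0 (by norm_num)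
                · exact cellA ρ t z (17/16) (9/8) (1109/3600) (101/200) (30603/320000) (10307/10000) (10607/10000) (5459/10000) (4159/5000) (1407/2000) (1407/2000) (288/625) (3199/5000) (773/2500) hρ1 ht0 hz hzρ h10 h9 h2 h0 (by norm_num)
              · rcases le_total ρ (19/16) with h11 | h11
                · exact cellA ρ t z (9/8) (19/16) (1109/3600) (101/200) (193819/1920000) (5303/5000) (5449/5000) (5459/10000) (4159/5000) (1407/2000) (1407/2000) (91/200) (1589/2500) (3177/10000) hρ1 ht0 hz hzρ h9 h11 h2 h0 (by norm_num)
                · exact cellA ρ t z (19/16) (5/4) (1109/3600) (101/200) (10201/96000) (10897/10000) (11181/10000) (5459/10000) (4159/5000) (1407/2000) (1407/2000) (1123/2500) (3157/5000) (3259/10000) hρ1 ht0 hz hzρ h11 h8 h2 h0 (by norm_num)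
            · rcases le_total ρ (11/8) with h12 | h12
              · exact cellA ρ t z (5/4) (11/8) (1109/3600) (101/200) (112211/960000) (559/500) (11727/10000) (5459/10000) (4159/5000) (1407/2000) (1407/2000) (1093/2500) (6229/10000) (1709/5000) hρ1 ht0 hz hzρ h8 h12 h2 h0 (by norm_num)
              · exact cellA ρ t z (11/8) (3/2) (1109/3600) (101/200) (10201/80000) (5863/5000) (1531/1250) (5459/10000) (4159/5000) (1407/2000) (1407/2000) (4249/10000) (384/625) (357/1000) hρ1 ht0 hz hzρ h12 h7 h2 h0 (by norm_num)
          · rcases le_total ρ (7/4) with h13 | h13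
            · rcases le_total ρ (13/8) with h14 | h14
              · rcases le_total t (2927/7200) with h15 | h15
                · exact cellA ρ t z (3/2) (13/8) (1109/3600) (2927/7200) (111375277/1244160000) (12247/10000) (3187/2500) (5459/10000) (4159/5000) (6297/10000) (7703/10000) (2337/5000) (563/1000) (2991/10000) hρ1 ht0 hz hzρ h7 h14 h2 h15 (by norm_num)
                · exact cellA ρ t z (3/2) (13/8) (2927/7200) (101/200) (132613/960000) (12247/10000) (3187/2500) (6297/10000) (7703/10000) (1407/2000) (1407/2000) (259/500) (757/1250) (929/2500) hρ1 ht0 hz hzρ h7 h14 h15 h0 (by norm_num)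
              · rcases le_total t (2927/7200) with h16 | h16
                · exact cellA ρ t z (13/8) (7/4) (1109/3600) (2927/7200) (59971303/622080000) (12747/10000) (13229/10000) (5459/10000) (4159/5000) (6297/10000) (7703/10000) (23/50) (348/625) (194/625) hρ1 ht0 hz hzρ h14 h13 h2 h16 (by norm_num)
                · exact cellA ρ t z (13/8) (7/4) (2927/7200) (101/200) (71407/480000) (12747/10000) (13229/10000) (6297/10000) (7703/10000) (1407/2000) (1407/2000) (5077/10000) (373/625) (3857/10000) hρ1 ht0 hz hzρ h14 h13 h16 h0 (by norm_num)
            · rcases le_total ρ (15/8) with h17 | h17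
              · rcases le_total ρ (29/16) with h18 | h18
                · exact cellA ρ t z (7/4) (29/16) (1109/3600) (101/200) (295829/1920000) (3307/2500) (13463/10000) (5459/10000) (4159/5000) (1407/2000) (1407/2000) (981/2500) (5923/10000) (157/400) hρ1 ht0 hz hzρ h13 h18 h2 h0 (by norm_num)
                · rcases le_total t (2927/7200) with h19 | h19
                  · exact cellA ρ t z (29/16) (15/8) (1109/3600) (2927/7200) (8567329/82944000) (6731/5000) (6847/5000) (5459/10000) (4159/5000) (6297/10000) (7703/10000) (181/400) (2753/5000) (3213/10000) hρ1 ht0 hz hzρ h18 h17 h2 h19 (by norm_num)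
                  · exact cellA ρ t z (29/16) (15/8) (2927/7200) (101/200) (10201/64000) (6731/5000) (6847/5000) (6297/10000) (7703/10000) (1407/2000) (1407/2000) (4971/10000) (2939/5000) (499/1250) hρ1 ht0 hz hzρ h18 h17 h19 h0 (by norm_num)
              · rcases le_total t (2927/7200) with h20 | h20
                · exact cellA ρ t z (15/8) (2) (1109/3600) (2927/7200) (8567329/77760000) (13693/10000) (14143/10000) (5459/10000) (4159/5000) (6297/10000) (7703/10000) (278/625) (5443/10000) (3319/10000) hρ1 ht0 hz hzρ h17 h1 h2 h20 (by norm_num)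
                · rcases le_total ρ (31/16) with h21 | h21
                  · exact cellA ρ t z (15/8) (31/16) (2927/7200) (101/200) (316231/1920000) (13693/10000) (174/125) (6297/10000) (7703/10000) (1407/2000) (1407/2000) (4917/10000) (5833/10000) (2029/5000) hρ1 ht0 hz hzρ h17 h21 h20 h0 (by norm_num)
                  · rcases le_total ρ (63/32) with h22 | h22
                    · exact cellA ρ t z (31/16) (63/32) (2927/7200) (101/200) (214221/1280000) (13919/10000) (877/625) (6297/10000) (7703/10000) (1407/2000) (1407/2000) (489/1000) (581/1000) (409/1000) hρ1 ht0 hz hzρ h21 h22 h20 h0 (by norm_num)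
                    · exact cellA ρ t z (63/32) (2) (2927/7200) (101/200) (10201/60000) (14031/10000) (14143/10000) (6297/10000) (7703/10000) (1407/2000) (1407/2000) (4863/10000) (5787/10000) (4123/10000) hρ1 ht0 hz hzρ h22 h1 h20 h0 (by norm_num)
      · rcases le_total t (1109/3600) with h23 | h23
        · rcases le_total t (503/2400) with h24 | h24
          · rcases le_total ρ (5/2) with h25 | h25
            · rcases le_total ρ (9/4) with h26 | h26
              · exact cellA ρ t z (2) (9/4) (1/(3*(9/4))) (503/2400) (253009/7680000) (7071/5000) (3/2) (929/2500) (9229/10000) (4467/10000) (889/1000) (1697/5000) (2101/5000) (363/2000) hρ1 ht0 hz hzρ h1 h26 (tlow ρ t (9/4) hρ0 h26 ht1) h24 (by norm_num)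
              · exact cellA ρ t z (9/4) (5/2) (1/(3*(5/2))) (503/2400) (253009/6912000) (3/2) (3953/2500) (3511/10000) (9309/10000) (4467/10000) (889/1000) (311/1000) (4159/10000) (1913/10000) hρ1 ht0 hz hzρ h26 h25 (tlow ρ t (5/2) hρ0 h25 ht1) h24 (by norm_num)
            · rcases le_total t (2309/14400) with h27 | h27
              · rcases le_total ρ (11/4) with h28 | h28
                · exact cellA ρ t z (5/2) (11/4) (1/(3*(11/4))) (2309/14400) (58646291/2488320000) (15811/10000) (2073/1250) (1667/5000) (4687/5000) (3877/10000) (9163/10000) (781/2500) (1849/5000) (307/2000) hρ1 ht0 hz hzρ h25 h28 (tlow ρ t (11/4) hρ0 h28 ht1) h27 (by norm_num)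
                · rcases le_total ρ (23/8) with h29 | h29
                  · exact cellA ρ t z (11/4) (23/8) (1/(3*(23/8))) (2309/14400) (122624063/4976640000) (16583/10000) (4239/2500) (1627/5000) (4701/5000) (3877/10000) (9163/10000) (3021/10000) (3683/10000) (1569/10000) hρ1 ht0 hz hzρ h28 h29 (tlow ρ t (23/8) hρ0 h29 ht1) h27 (by norm_num)
                  · exact cellA ρ t z (23/8) (3) (1/(3*(3))) (2309/14400) (5331481/207360000) (3391/2000) (17321/10000) (3179/10000) (2357/2500) (3877/10000) (9163/10000) (1461/5000) (3669/10000) (1603/10000) hρ1 ht0 hz hzρ h29 hρ3 (tlow ρ t (3) hρ0 hρ3 ht1) h27 (by norm_num)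
              · rcases le_total ρ (11/4) with h30 | h30
                · exact cellA ρ t z (5/2) (11/4) (2309/14400) (503/2400) (2783099/69120000) (15811/10000) (2073/1250) (3877/10000) (9163/10000) (4467/10000) (889/1000) (693/2000) (2057/5000) (1003/5000) hρ1 ht0 hz hzρ h25 h30 h27 h24 (by norm_num)
                · exact cellA ρ t z (11/4) (3) (2309/14400) (503/2400) (253009/5760000) (16583/10000) (17321/10000) (3877/10000) (9163/10000) (4467/10000) (889/1000) (853/2500) (407/1000) (419/2000) hρ1 ht0 hz hzρ h30 hρ3 h27 h24 (by norm_num)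
          · rcases le_total ρ (5/2) with h31 | h31
            · rcases le_total ρ (9/4) with h32 | h32
              · exact cellA ρ t z (2) (9/4) (503/2400) (1109/3600) (1229881/17280000) (7071/5000) (3/2) (4467/10000) (889/1000) (5459/10000) (4159/5000) (93/250) (4867/10000) (2667/10000) hρ1 ht0 hz hzρ h1 h32 h24 h23 (by norm_num)
              · exact cellA ρ t z (9/4) (5/2) (503/2400) (1109/3600) (1229881/15552000) (3/2) (3953/2500) (4467/10000) (889/1000) (5459/10000) (4159/5000) (903/2500) (957/2000) (703/2500) hρ1 ht0 hz hzρ h32 h31 h24 h23 (by norm_num)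
            · rcases le_total t (3727/14400) with h33 | h33
              · rcases le_total ρ (11/4) with h34 | h34
                · exact cellA ρ t z (5/2) (11/4) (503/2400) (3727/14400) (152795819/2488320000) (15811/10000) (2073/1250) (4467/10000) (889/1000) (1247/2500) (8609/10000) (3849/10000) (4443/10000) (1239/5000) hρ1 ht0 hz hzρ h31 h34 h24 h33 (by norm_num)
                · exact cellA ρ t z (11/4) (3) (503/2400) (3727/14400) (13890529/207360000) (16583/10000) (17321/10000) (4467/10000) (889/1000) (1247/2500) (8609/10000) (236/625) (4379/10000) (647/2500) hρ1 ht0 hz hzρ h34 hρ3 h24 h33 (by norm_num)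
              · rcases le_total ρ (11/4) with h35 | h35
                · exact cellA ρ t z (5/2) (11/4) (3727/14400) (1109/3600) (13528691/155520000) (15811/10000) (2073/1250) (1247/2500) (8609/10000) (5459/10000) (4159/5000) (829/2000) (4701/10000) (2949/10000) hρ1 ht0 hz hzρ h31 h35 h33 h23 (by norm_num)
                · exact cellA ρ t z (11/4) (3) (3727/14400) (1109/3600) (1229881/12960000) (16583/10000) (17321/10000) (1247/2500) (8609/10000) (5459/10000) (4159/5000) (253/625) (577/1250) (77/250) hρ1 ht0 hz hzρ h35 hρ3 h33 h23 (by norm_num)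
        · rcases le_total ρ (5/2) with h36 | h36
          · rcases le_total ρ (9/4) with h37 | h37
            · rcases le_total ρ (17/8) with h38 | h38
              · rcases le_total t (2927/7200) with h39 | h39
                · exact cellA ρ t z (2) (17/8) (1109/3600) (2927/7200) (145644593/1244160000) (7071/5000) (7289/5000) (5459/10000) (4159/5000) (6297/10000) (7703/10000) (437/1000) (269/500) (3421/10000) hρ1 ht0 hz hzρ h1 h38 h23 h39 (by norm_num)
                · rcases le_total ρ (33/16) with h40 | h40
                  · rcases le_total ρ (65/32) with h41 | h41
                    · exact cellA ρ t z (2) (65/32) (2927/7200) (1/(2)) (65/384) (7071/5000) (14253/10000) (6297/10000) (7703/10000) (7/10) (7071/10000) (487/1000) (23/40) (2057/5000) hρ1 ht0 hz hzρ h1 h41 h39 (thigh ρ t (2) (by norm_num) h1 ht2) (by norm_num)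
                    · exact cellA ρ t z (65/32) (33/16) (2927/7200) (1/(65/32)) (704/4225) (3563/2500) (7181/5000) (6297/10000) (7703/10000) (434/625) (57/80) (4897/10000) (2853/5000) (4081/10000) hρ1 ht0 hz hzρ h41 h40 h39 (thigh ρ t (65/32) (by norm_num) h41 ht2) (by norm_num)
                  · exact cellA ρ t z (33/16) (17/8) (2927/7200) (1/(33/16)) (544/3267) (14361/10000) (7289/5000) (6297/10000) (7703/10000) (689/1000) (7177/10000) (4899/10000) (2821/5000) (51/125) hρ1 ht0 hz hzρ h40 h38 h39 (thigh ρ t (33/16) (by norm_num) h40 ht2) (by norm_num)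
              · rcases le_total ρ (35/16) with h42 | h42
                · exact cellA ρ t z (17/8) (35/16) (1109/3600) (1/(17/8)) (140/867) (14577/10000) (14791/10000) (5459/10000) (4159/5000) (3393/5000) (1819/2500) (957/2500) (5559/10000) (2009/5000) hρ1 ht0 hz hzρ h38 h42 h23 (thigh ρ t (17/8) (by norm_num) h38 ht2) (by norm_num)
                · exact cellA ρ t z (35/16) (9/4) (1109/3600) (1/(35/16)) (192/1225) (1479/1000) (3/2) (5459/10000) (4159/5000) (3343/5000) (7367/10000) (3889/10000) (137/250) (1979/5000) hρ1 ht0 hz hzρ h42 h37 h23 (thigh ρ t (35/16) (by norm_num) h42 ht2) (by norm_num)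
            · rcases le_total ρ (19/8) with h43 | h43
              · rcases le_total ρ (37/16) with h44 | h44
                · exact cellA ρ t z (9/4) (37/16) (1109/3600) (1/(9/4)) (37/243) (3/2) (15207/10000) (5459/10000) (4159/5000) (6591/10000) (7453/10000) (3947/10000) (1081/2000) (1951/5000) hρ1 ht0 hz hzρ h37 h44 h23 (thigh ρ t (9/4) (by norm_num) h37 ht2) (by norm_num)
                · exact cellA ρ t z (37/16) (19/8) (1109/3600) (1/(37/16)) (608/4107) (7603/5000) (3853/2500) (5459/10000) (4159/5000) (6499/10000) (7533/10000) (2/5) (1333/2500) (3847/10000) hρ1 ht0 hz hzρ h44 h43 h23 (thigh ρ t (37/16) (by norm_num) h44 ht2) (by norm_num)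
              · exact cellA ρ t z (19/8) (5/2) (1109/3600) (1/(19/8)) (160/1083) (15411/10000) (3953/2500) (5459/10000) (4159/5000) (6411/10000) (951/1250) (4003/10000) (5227/10000) (3843/10000) hρ1 ht0 hz hzρ h43 h36 h23 (thigh ρ t (19/8) (by norm_num) h43 ht2) (by norm_num)
          · rcases le_total ρ (11/4) with h45 | h45
            · rcases le_total ρ (21/8) with h46 | h46
              · exact cellA ρ t z (5/2) (21/8) (1109/3600) (1/(5/2)) (7/50) (15811/10000) (8101/5000) (5459/10000) (4159/5000) (1561/2500) (1549/2000) (4099/10000) (5099/10000) (3741/10000) hρ1 ht0 hz hzρ h36 h46 h23 (thigh ρ t (5/2) (by norm_num) h36 ht2) (by norm_num)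
              · exact cellA ρ t z (21/8) (11/4) (1109/3600) (1/(21/8)) (176/1323) (16201/10000) (2073/1250) (5459/10000) (4159/5000) (609/1000) (7867/10000) (4183/10000) (4979/10000) (3647/10000) hρ1 ht0 hz hzρ h46 h45 h23 (thigh ρ t (21/8) (by norm_num) h46 ht2) (by norm_num)
            · rcases le_total ρ (23/8) with h47 | h47
              · exact cellA ρ t z (11/4) (23/8) (1109/3600) (1/(11/4)) (46/363) (16583/10000) (4239/2500) (5459/10000) (4159/5000) (2973/5000) (7977/10000) (2129/5000) (4867/10000) (3559/10000) hρ1 ht0 hz hzρ h45 h47 h23 (thigh ρ t (11/4) (by norm_num) h45 ht2) (by norm_num)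
              · exact cellA ρ t z (23/8) (3) (1109/3600) (1/(23/8)) (64/529) (3391/2000) (17321/10000) (5459/10000) (4159/5000) (1453/2500) (323/400) (173/400) (2381/5000) (1739/5000) hρ1 ht0 hz hzρ h47 hρ3 h23 (thigh ρ t (23/8) (by norm_num) h47 ht2) (by norm_num)
    · rcases le_total t (301/400) with h48 | h48
      · rcases le_total ρ (2) with h49 | h49
        · rcases le_total ρ (3/2) with h50 | h50
          · rcases le_total t (503/800) with h51 | h51
            · rcases le_total ρ (5/4) with h52 | h52
              · rcases le_total ρ (9/8) with h53 | h53
                · rcases le_total t (907/1600) with h54 | h54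
                  · rcases le_total ρ (17/16) with h55 | h55
                    · rcases le_total ρ (33/32) with h56 | h56
                      · rcases le_total ρ (65/64) with h57 | h57
                        · exact cellB ρ t z (1) (65/64) (101/200) (907/1600) (10694437/98304000) (343/640) (1) (5039/5000) (1407/2000) (6581/10000) (1/10) (3657/10000) (3147/5000) (423/625) (1649/5000) hρ1 ht0 hz hzρ hxy hρ1 h57 h0 h54 (by norm_num)
                        · exact cellB ρ t z (65/64) (33/32) (101/200) (907/1600) (9049139/81920000) (343/640) (10077/10000) (2539/2500) (1407/2000) (6581/10000) (1/10) (3657/10000) (6281/10000) (1351/2000) (3323/10000) hρ1 ht0 hz hzρ hxy h57 h56 h0 h54 (by norm_num)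
                      · rcases le_total ρ (67/64) with h58 | h58
                        · exact cellB ρ t z (33/32) (67/64) (101/200) (907/1600) (55117483/491520000) (343/640) (2031/2000) (1279/1250) (1407/2000) (6581/10000) (1/10) (3657/10000) (6267/10000) (6743/10000) (837/2500) hρ1 ht0 hz hzρ hxy h56 h58 h0 h54 (by norm_num)
                        · exact cellB ρ t z (67/64) (17/16) (101/200) (907/1600) (13985033/122880000) (343/640) (10231/10000) (2577/2500) (1407/2000) (6581/10000) (1/10) (3657/10000) (3127/5000) (6731/10000) (3373/10000) hρ1 ht0 hz hzρ hxy h58 h55 h0 h54 (by norm_num)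
                    · rcases le_total ρ (35/32) with h59 | h59
                      · rcases le_total ρ (69/64) with h60 | h60
                        · exact cellB ρ t z (17/16) (69/64) (101/200) (907/1600) (18920927/163840000) (343/640) (10307/10000) (649/625) (1407/2000) (6581/10000) (1/10) (3657/10000) (6241/10000) (3359/5000) (1699/5000) hρ1 ht0 hz hzρ hxy h55 h60 h0 h54 (by norm_num)
                        · exact cellB ρ t z (69/64) (35/32) (101/200) (907/1600) (5758543/49152000) (343/640) (10383/10000) (10459/10000) (1407/2000) (6581/10000) (1/10) (3657/10000) (6227/10000) (3353/5000) (1711/5000) hρ1 ht0 hz hzρ hxy h60 h59 h0 h54 (by norm_num)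
                      · exact cellB ρ t z (35/32) (9/8) (101/200) (907/1600) (2467947/20480000) (343/640) (5229/5000) (10607/10000) (1407/2000) (6581/10000) (1/10) (3657/10000) (31/50) (6681/10000) (3471/10000) hρ1 ht0 hz hzρ hxy h59 h53 h0 h54 (by norm_num)
                  · exact (prune4 ρ t z (9/8) (907/1600) (503/800) hρ0 h53 h54 h51 (le_of_lt ht0) (by norm_num) hxy hzρ (by norm_num) (by norm_num)).elim
                · rcases le_total ρ (19/16) with h61 | h61
                  · rcases le_total t (907/1600) with h62 | h62
                    · rcases le_total ρ (37/32) with h63 | h63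
                      · exact cellB ρ t z (9/8) (37/32) (101/200) (907/1600) (30438013/245760000) (343/640) (5303/5000) (10753/10000) (1407/2000) (6581/10000) (1/10) (3657/10000) (6173/10000) (1331/2000) (3519/10000) hρ1 ht0 hz hzρ hxy h53 h63 h0 h62 (by norm_num)
                      · exact cellB ρ t z (37/32) (19/16) (101/200) (907/1600) (15630331/122880000) (343/640) (672/625) (5449/5000) (1407/2000) (6581/10000) (1/10) (3657/10000) (3073/5000) (663/1000) (1783/5000) hρ1 ht0 hz hzρ hxy h63 h61 h0 h62 (by norm_num)
                    · exact (prune4 ρ t z (19/16) (907/1600) (503/800) hρ0 h61 h62 h51 (le_of_lt ht0) (by norm_num) hxy hzρ (by norm_num) (by norm_num)).elim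
                  · rcases le_total ρ (39/32) with h64 | h64
                    · rcases le_total t (907/1600) with h65 | h65
                      · exact cellB ρ t z (19/16) (39/32) (101/200) (907/1600) (10694437/81920000) (343/640) (10897/10000) (138/125) (1407/2000) (6581/10000) (1/10) (3657/10000) (6119/10000) (1321/2000) (3613/10000) hρ1 ht0 hz hzρ hxy h61 h64 h0 h65 (by norm_num)
                      · exact (prune4 ρ t z (39/32) (907/1600) (503/800) hρ0 h64 h65 h51 (le_of_lt ht0) (by norm_num) hxy hzρ (by norm_num) (by norm_num)).elim
                    · rcases le_total ρ (79/64) with h66 | h66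
                      · rcases le_total t (907/1600) with h67 | h67
                        · exact cellB ρ t z (39/32) (79/64) (101/200) (907/1600) (64989271/491520000) (343/640) (11039/10000) (11111/10000) (1407/2000) (6581/10000) (1/10) (3657/10000) (1221/2000) (412/625) (909/2500) hρ1 ht0 hz hzρ hxy h64 h66 h0 h67 (by norm_num)
                        · exact (prune4 ρ t z (79/64) (907/1600) (503/800) hρ0 h66 h67 h51 (le_of_lt ht0) (by norm_num) hxy hzρ (by norm_num) (by norm_num)).elim
                      · rcases le_total t (907/1600) with h68 | h68
                        · exact cellB ρ t z (79/64) (5/4) (101/200) (907/1600) (822649/6144000) (343/640) (1111/1000) (11181/10000) (1407/2000) (6581/10000) (1/10) (3657/10000) (6091/10000) (329/500) (3659/10000) hρ1 ht0 hz hzρ hxy h66 h52 h0 h68 (by norm_num)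
                        · rcases le_total t (1913/3200) with h69 | h69
                          · exact cellB ρ t z (79/64) (5/4) (907/1600) (1913/3200) (3659569/24576000) (3727/6400) (1111/1000) (11181/10000) (6581/10000) (6341/10000) (3657/10000) (2211/5000) (1293/2000) (67/100) (1929/5000) hρ1 ht0 hz hzρ hxy h66 h52 h68 h69 (by norm_num)
                          · exact (prune4 ρ t z (5/4) (1913/3200) (503/800) hρ0 h52 h69 h51 (le_of_lt ht0) (by norm_num) hxy hzρ (by norm_num) (by norm_num)).elim
              · rcases le_total ρ (11/8) with h70 | h70
                · rcases le_total ρ (21/16) with h71 | h71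
                  · rcases le_total ρ (41/32) with h72 | h72
                    · rcases le_total ρ (81/64) with h73 | h73
                      · rcases le_total t (907/1600) with h74 | h74
                        · exact cellB ρ t z (5/4) (81/64) (101/200) (907/1600) (22211523/163840000) (343/640) (559/500) (9/8) (1407/2000) (6581/10000) (1/10) (3657/10000) (3039/5000) (6567/10000) (3681/10000) hρ1 ht0 hz hzρ hxy h52 h73 h0 h74 (by norm_num)
                        · rcases le_total t (1913/3200) with h75 | h75
                          · exact cellB ρ t z (5/4) (81/64) (907/1600) (1913/3200) (98808363/655360000) (3727/6400) (559/500) (9/8) (6581/10000) (6341/10000) (3657/10000) (2211/5000) (129/200) (3343/5000) (1941/5000) hρ1 ht0 hz hzρ hxy h52 h73 h74 h75 (by norm_num)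
                          · exact (prune4 ρ t z (81/64) (1913/3200) (503/800) hρ0 h73 h75 h51 (le_of_lt ht0) (by norm_num) hxy hzρ (by norm_num) (by norm_num)).elim
                      · rcases le_total t (907/1600) with h76 | h76
                        · exact cellB ρ t z (81/64) (41/32) (101/200) (907/1600) (33728609/245760000) (343/640) (9/8) (283/250) (1407/2000) (6581/10000) (1/10) (3657/10000) (379/625) (3277/5000) (463/1250) hρ1 ht0 hz hzρ hxy h73 h72 h0 h76 (by norm_num)
                        · rcases le_total t (1913/3200) with h77 | h77
                          · exact cellB ρ t z (81/64) (41/32) (907/1600) (1913/3200) (150042329/983040000) (3727/6400) (9/8) (283/250) (6581/10000) (6341/10000) (3657/10000) (2211/5000) (1609/2500) (417/625) (1953/5000) hρ1 ht0 hz hzρ hxy h73 h72 h76 h77 (by norm_num)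
                          · exact (prune4 ρ t z (41/32) (1913/3200) (503/800) hρ0 h72 h77 h51 (le_of_lt ht0) (by norm_num) hxy hzρ (by norm_num) (by norm_num)).elim
                    · rcases le_total ρ (83/64) with h78 | h78
                      · rcases le_total t (907/1600) with h79 | h79
                        · exact cellB ρ t z (41/32) (83/64) (101/200) (907/1600) (68279867/491520000) (343/640) (11319/10000) (11389/10000) (1407/2000) (6581/10000) (1/10) (3657/10000) (121/200) (6541/10000) (3727/10000) hρ1 ht0 hz hzρ hxy h72 h78 h0 h79 (by norm_num)
                        · rcases le_total t (1913/3200) with h80 | h80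
                          · exact cellB ρ t z (41/32) (83/64) (907/1600) (1913/3200) (303744227/1966080000) (3727/6400) (11319/10000) (11389/10000) (6581/10000) (6341/10000) (3657/10000) (2211/5000) (6421/10000) (3329/5000) (393/1000) hρ1 ht0 hz hzρ hxy h72 h78 h79 h80 (by norm_num)
                          · exact (prune4 ρ t z (83/64) (1913/3200) (503/800) hρ0 h78 h80 h51 (le_of_lt ht0) (by norm_num) hxy hzρ (by norm_num) (by norm_num)).elim
                      · rcases le_total t (907/1600) with h81 | h81
                        · exact cellB ρ t z (83/64) (21/16) (101/200) (907/1600) (5758543/40960000) (343/640) (2847/2500) (11457/10000) (1407/2000) (6581/10000) (1/10) (3657/10000) (1509/2500) (6529/10000) (3749/10000) hρ1 ht0 hz hzρ hxy h78 h71 h0 h81 (by norm_num)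
                        · rcases le_total t (1913/3200) with h82 | h82
                          · exact cellB ρ t z (83/64) (21/16) (907/1600) (1913/3200) (25616983/163840000) (3727/6400) (2847/2500) (11457/10000) (6581/10000) (6341/10000) (3657/10000) (2211/5000) (6407/10000) (1661/2500) (1977/5000) hρ1 ht0 hz hzρ hxy h78 h71 h81 h82 (by norm_num)
                          · exact (prune4 ρ t z (21/16) (1913/3200) (503/800) hρ0 h71 h82 h51 (le_of_lt ht0) (by norm_num) hxy hzρ (by norm_num) (by norm_num)).elim
                  · rcases le_total ρ (43/32) with h83 | h83
                    · rcases le_total ρ (85/64) with h84 | h84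
                      · rcases le_total t (907/1600) with h85 | h85
                        · exact cellB ρ t z (21/16) (85/64) (101/200) (907/1600) (13985033/98304000) (343/640) (716/625) (461/400) (1407/2000) (6581/10000) (1/10) (3657/10000) (3011/5000) (1629/2500) (3771/10000) hρ1 ht0 hz hzρ hxy h71 h84 h0 h85 (by norm_num)
                        · rcases le_total t (1913/3200) with h86 | h86
                          · exact cellB ρ t z (21/16) (85/64) (907/1600) (1913/3200) (62212673/393216000) (3727/6400) (716/625) (461/400) (6581/10000) (6341/10000) (3657/10000) (2211/5000) (799/1250) (663/1000) (3977/10000) hρ1 ht0 hz hzρ hxy h71 h84 h85 h86 (by norm_num)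
                          · exact (prune4 ρ t z (85/64) (1913/3200) (503/800) hρ0 h84 h86 h51 (le_of_lt ht0) (by norm_num) hxy hzρ (by norm_num) (by norm_num)).elim
                      · rcases le_total t (907/1600) with h87 | h87
                        · exact cellB ρ t z (85/64) (43/32) (101/200) (907/1600) (35373907/245760000) (343/640) (2881/2500) (11593/10000) (1407/2000) (6581/10000) (1/10) (3657/10000) (751/1250) (6503/10000) (3793/10000) hρ1 ht0 hz hzρ hxy h84 h83 h0 h87 (by norm_num)
                        · rcases le_total t (1913/3200) with h88 | h88
                          · exact cellB ρ t z (85/64) (43/32) (907/1600) (1913/3200) (157361467/983040000) (3727/6400) (2881/2500) (11593/10000) (6581/10000) (6341/10000) (3657/10000) (2211/5000) (3189/5000) (827/1250) (2/5) hρ1 ht0 hz hzρ hxy h84 h83 h87 h88 (by norm_num)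
                          · exact (prune4 ρ t z (43/32) (1913/3200) (503/800) hρ0 h83 h88 h51 (le_of_lt ht0) (by norm_num) hxy hzρ (by norm_num) (by norm_num)).elim
                    · rcases le_total ρ (87/64) with h89 | h89
                      · rcases le_total t (907/1600) with h90 | h90
                        · exact cellB ρ t z (43/32) (87/64) (101/200) (907/1600) (23856821/163840000) (343/640) (1449/1250) (583/500) (1407/2000) (6581/10000) (1/10) (3657/10000) (2997/5000) (649/1000) (763/2000) hρ1 ht0 hz hzρ hxy h83 h89 h0 h90 (by norm_num)
                        · rcases le_total t (1913/3200) with h91 | h91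
                          · exact cellB ρ t z (43/32) (87/64) (907/1600) (1913/3200) (106127501/655360000) (3727/6400) (1449/1250) (583/500) (6581/10000) (6341/10000) (3657/10000) (2211/5000) (6363/10000) (3301/5000) (503/1250) hρ1 ht0 hz hzρ hxy h83 h89 h90 h91 (by norm_num)
                          · exact (prune4 ρ t z (87/64) (1913/3200) (503/800) hρ0 h89 h91 h51 (le_of_lt ht0) (by norm_num) hxy hzρ (by norm_num) (by norm_num)).elim
                      · rcases le_total t (907/1600) with h92 | h92
                        · exact cellB ρ t z (87/64) (11/8) (101/200) (907/1600) (9049139/61440000) (343/640) (11659/10000) (11727/10000) (1407/2000) (6581/10000) (1/10) (3657/10000) (299/500) (6477/10000) (3837/10000) hρ1 ht0 hz hzρ hxy h89 h70 h0 h92 (by norm_num)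
                        · rcases le_total t (1913/3200) with h93 | h93
                          · exact cellB ρ t z (87/64) (11/8) (907/1600) (1913/3200) (40255259/245760000) (3727/6400) (11659/10000) (11727/10000) (6581/10000) (6341/10000) (3657/10000) (2211/5000) (1587/2500) (6587/10000) (4047/10000) hρ1 ht0 hz hzρ hxy h89 h70 h92 h93 (by norm_num)
                          · exact (prune4 ρ t z (11/8) (1913/3200) (503/800) hρ0 h70 h93 h51 (le_of_lt ht0) (by norm_num) hxy hzρ (by norm_num) (by norm_num)).elim
                · rcases le_total ρ (23/16) with h94 | h94
                  · rcases le_total ρ (45/32) with h95 | h95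
                    · rcases le_total ρ (89/64) with h96 | h96
                      · rcases le_total t (907/1600) with h97 | h97
                        · exact cellB ρ t z (11/8) (89/64) (101/200) (907/1600) (73215761/491520000) (343/640) (5863/5000) (11793/10000) (1407/2000) (6581/10000) (1/10) (3657/10000) (2983/5000) (404/625) (3859/10000) hρ1 ht0 hz hzρ hxy h70 h96 h0 h97 (by norm_num)
                        · rcases le_total t (1913/3200) with h98 | h98
                          · exact cellB ρ t z (11/8) (89/64) (907/1600) (1913/3200) (325701641/1966080000) (3727/6400) (5863/5000) (11793/10000) (6581/10000) (6341/10000) (3657/10000) (2211/5000) (3167/5000) (6573/10000) (407/1000) hρ1 ht0 hz hzρ hxy h70 h96 h97 h98 (by norm_num)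
                          · exact (prune4 ρ t z (89/64) (1913/3200) (503/800) hρ0 h96 h98 h51 (le_of_lt ht0) (by norm_num) hxy hzρ (by norm_num) (by norm_num)).elim
                      · rcases le_total t (907/1600) with h99 | h99
                        · exact cellB ρ t z (89/64) (45/32) (101/200) (907/1600) (2467947/16384000) (343/640) (737/625) (11859/10000) (1407/2000) (6581/10000) (1/10) (3657/10000) (372/625) (6451/10000) (3881/10000) hρ1 ht0 hz hzρ hxy h96 h95 h0 h99 (by norm_num)
                        · rcases le_total t (1913/3200) with h100 | h100
                          · exact cellB ρ t z (89/64) (45/32) (907/1600) (1913/3200) (10978707/65536000) (3727/6400) (737/625) (11859/10000) (6581/10000) (6341/10000) (3657/10000) (2211/5000) (6319/10000) (6559/10000) (1023/2500) hρ1 ht0 hz hzρ hxy h96 h95 h99 h100 (by norm_num)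
                          · exact (prune4 ρ t z (45/32) (1913/3200) (503/800) hρ0 h95 h100 h51 (le_of_lt ht0) (by norm_num) hxy hzρ (by norm_num) (by norm_num)).elim
                    · rcases le_total ρ (91/64) with h101 | h101
                      · rcases le_total t (907/1600) with h102 | h102
                        · exact cellB ρ t z (45/32) (91/64) (101/200) (907/1600) (74861059/491520000) (343/640) (5929/5000) (477/400) (1407/2000) (6581/10000) (1/10) (3657/10000) (2969/5000) (3219/5000) (1951/5000) hρ1 ht0 hz hzρ hxy h95 h101 h0 h102 (by norm_num)
                        · rcases le_total t (1913/3200) with h103 | h103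
                          · exact cellB ρ t z (45/32) (91/64) (907/1600) (1913/3200) (333020779/1966080000) (3727/6400) (5929/5000) (477/400) (6581/10000) (6341/10000) (3657/10000) (2211/5000) (394/625) (1309/2000) (823/2000) hρ1 ht0 hz hzρ hxy h95 h101 h102 h103 (by norm_num)
                          · exact (prune4 ρ t z (91/64) (1913/3200) (503/800) hρ0 h101 h103 h51 (le_of_lt ht0) (by norm_num) hxy hzρ (by norm_num) (by norm_num)).elim
                      · rcases le_total t (907/1600) with h104 | h104
                        · exact cellB ρ t z (91/64) (23/16) (101/200) (907/1600) (18920927/122880000) (343/640) (2981/2500) (1199/1000) (1407/2000) (6581/10000) (1/10) (3657/10000) (1481/2500) (257/400) (981/2500) hρ1 ht0 hz hzρ hxy h101 h94 h0 h104 (by norm_num)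
                        · rcases le_total t (1913/3200) with h105 | h105
                          · exact cellB ρ t z (91/64) (23/16) (907/1600) (1913/3200) (84170087/491520000) (3727/6400) (2981/2500) (1199/1000) (6581/10000) (6341/10000) (3657/10000) (2211/5000) (6289/10000) (6531/10000) (2069/5000) hρ1 ht0 hz hzρ hxy h101 h94 h104 h105 (by norm_num)
                          · exact (prune4 ρ t z (23/16) (1913/3200) (503/800) hρ0 h94 h105 h51 (le_of_lt ht0) (by norm_num) hxy hzρ (by norm_num) (by norm_num)).elim
                  · rcases le_total ρ (47/32) with h106 | h106
                    · rcases le_total ρ (93/64) with h107 | h107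
                      · rcases le_total t (907/1600) with h108 | h108
                        · exact cellB ρ t z (23/16) (93/64) (101/200) (907/1600) (25502119/163840000) (343/640) (11989/10000) (2411/2000) (1407/2000) (6581/10000) (1/10) (3657/10000) (591/1000) (1603/2500) (789/2000) hρ1 ht0 hz hzρ hxy h94 h107 h0 h108 (by norm_num)
                        · rcases le_total t (1913/3200) with h109 | h109
                          · exact cellB ρ t z (23/16) (93/64) (907/1600) (1913/3200) (113446639/655360000) (3727/6400) (11989/10000) (2411/2000) (6581/10000) (6341/10000) (3657/10000) (2211/5000) (251/400) (1629/2500) (52/125) hρ1 ht0 hz hzρ hxy h94 h107 h108 h109 (by norm_num)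
                          · exact (prune4 ρ t z (93/64) (1913/3200) (503/800) hρ0 h107 h109 h51 (le_of_lt ht0) (by norm_num) hxy hzρ (by norm_num) (by norm_num)).elim
                      · rcases le_total t (907/1600) with h110 | h110
                        · exact cellB ρ t z (93/64) (47/32) (101/200) (907/1600) (38664503/245760000) (343/640) (6027/5000) (303/250) (1407/2000) (6581/10000) (1/10) (3657/10000) (737/1250) (6399/10000) (1983/5000) hρ1 ht0 hz hzρ hxy h107 h106 h0 h110 (by norm_num)
                        · rcases le_total t (1913/3200) with h111 | h111
                          · exact cellB ρ t z (93/64) (47/32) (907/1600) (1913/3200) (171999743/983040000) (3727/6400) (6027/5000) (303/250) (6581/10000) (6341/10000) (3657/10000) (2211/5000) (313/500) (3251/5000) (2091/5000) hρ1 ht0 hz hzρ hxy h107 h106 h110 h111 (by norm_num)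
                          · exact (prune4 ρ t z (47/32) (1913/3200) (503/800) hρ0 h106 h111 h51 (le_of_lt ht0) (by norm_num) hxy hzρ (by norm_num) (by norm_num)).elim
                    · rcases le_total ρ (95/64) with h112 | h112
                      · rcases le_total t (907/1600) with h113 | h113
                        · exact cellB ρ t z (47/32) (95/64) (101/200) (907/1600) (15630331/98304000) (343/640) (12119/10000) (1523/1250) (1407/2000) (6581/10000) (1/10) (3657/10000) (2941/5000) (3193/5000) (3987/10000) hρ1 ht0 hz hzρ hxy h106 h112 h0 h113 (by norm_num)
                        · rcases le_total t (1913/3200) with h114 | h114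
                          · exact cellB ρ t z (47/32) (95/64) (907/1600) (1913/3200) (69531811/393216000) (3727/6400) (12119/10000) (1523/1250) (6581/10000) (6341/10000) (3657/10000) (2211/5000) (1249/2000) (811/1250) (841/2000) hρ1 ht0 hz hzρ hxy h106 h112 h113 h114 (by norm_num)
                          · exact (prune4 ρ t z (95/64) (1913/3200) (503/800) hρ0 h112 h114 h51 (le_of_lt ht0) (by norm_num) hxy hzρ (by norm_num) (by norm_num)).elim
                      · rcases le_total t (907/1600) with h115 | h115
                        · exact cellB ρ t z (95/64) (3/2) (101/200) (907/1600) (822649/5120000) (343/640) (12183/10000) (1531/1250) (1407/2000) (6581/10000) (1/10) (3657/10000) (5867/10000) (6373/10000) (501/1250) hρ1 ht0 hz hzρ hxy h112 h50 h0 h115 (by norm_num)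
                        · rcases le_total t (1913/3200) with h116 | h116
                          · exact cellB ρ t z (95/64) (3/2) (907/1600) (1913/3200) (3659569/20480000) (3727/6400) (12183/10000) (1531/1250) (6581/10000) (6341/10000) (3657/10000) (2211/5000) (623/1000) (6473/10000) (4227/10000) hρ1 ht0 hz hzρ hxy h112 h50 h115 h116 (by norm_num)
                          · exact (prune4 ρ t z (3/2) (1913/3200) (503/800) hρ0 h50 h116 h51 (le_of_lt ht0) (by norm_num) hxy hzρ (by norm_num) (by norm_num)).elim
            · exact (prune4 ρ t z (3/2) (503/800) (301/400) hρ0 h50 h51 h48 (le_of_lt ht0) (by norm_num) hxy hzρ (by norm_num) (by norm_num)).elim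
          · rcases le_total ρ (7/4) with h117 | h117
            · rcases le_total t (503/800) with h118 | h118
              · rcases le_total ρ (13/8) with h119 | h119
                · rcases le_total ρ (25/16) with h120 | h120
                  · rcases le_total ρ (49/32) with h121 | h121
                    · rcases le_total ρ (97/64) with h122 | h122
                      · rcases le_total t (907/1600) with h123 | h123
                        · exact cellB ρ t z (3/2) (97/64) (101/200) (907/1600) (79796953/491520000) (343/640) (12247/10000) (1539/1250) (1407/2000) (6581/10000) (1/10) (3657/10000) (5853/10000) (159/250) (4029/10000) hρ1 ht0 hz hzρ hxy h50 h122 h0 h123 (by norm_num)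
                        · rcases le_total t (1913/3200) with h124 | h124
                          · exact cellB ρ t z (3/2) (97/64) (907/1600) (1913/3200) (354978193/1966080000) (3727/6400) (12247/10000) (1539/1250) (6581/10000) (6341/10000) (3657/10000) (2211/5000) (1243/2000) (6459/10000) (4249/10000) hρ1 ht0 hz hzρ hxy h50 h122 h123 h124 (by norm_num)
                          · exact (prune4 ρ t z (97/64) (1913/3200) (503/800) hρ0 h122 h124 h118 (le_of_lt ht0) (by norm_num) hxy hzρ (by norm_num) (by norm_num)).elim
                      · rcases le_total t (907/1600) with h125 | h125
                        · exact cellB ρ t z (97/64) (49/32) (101/200) (907/1600) (40309801/245760000) (343/640) (12311/10000) (99/80) (1407/2000) (6581/10000) (1/10) (3657/10000) (5839/10000) (6347/10000) (4049/10000) hρ1 ht0 hz hzρ hxy h122 h121 h0 h125 (by norm_num)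
                        · rcases le_total t (1913/3200) with h126 | h126
                          · exact cellB ρ t z (97/64) (49/32) (907/1600) (1913/3200) (179318881/983040000) (3727/6400) (12311/10000) (99/80) (6581/10000) (6341/10000) (3657/10000) (2211/5000) (31/50) (1289/2000) (427/1000) hρ1 ht0 hz hzρ hxy h122 h121 h125 h126 (by norm_num)
                          · exact (prune4 ρ t z (49/32) (1913/3200) (503/800) hρ0 h121 h126 h118 (le_of_lt ht0) (by norm_num) hxy hzρ (by norm_num) (by norm_num)).elim
                    · rcases le_total ρ (99/64) with h127 | h127
                      · rcases le_total t (907/1600) with h128 | h128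
                        · exact cellB ρ t z (49/32) (99/64) (101/200) (907/1600) (27147417/163840000) (343/640) (6187/5000) (6219/5000) (1407/2000) (6581/10000) (1/10) (3657/10000) (364/625) (6333/10000) (407/1000) hρ1 ht0 hz hzρ hxy h121 h127 h0 h128 (by norm_num)
                        · rcases le_total t (1913/3200) with h129 | h129
                          · exact cellB ρ t z (49/32) (99/64) (907/1600) (1913/3200) (120765777/655360000) (3727/6400) (6187/5000) (6219/5000) (6581/10000) (6341/10000) (3657/10000) (2211/5000) (1237/2000) (643/1000) (1073/2500) hρ1 ht0 hz hzρ hxy h121 h127 h128 h129 (by norm_num)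
                          · exact (prune4 ρ t z (99/64) (1913/3200) (503/800) hρ0 h127 h129 h118 (le_of_lt ht0) (by norm_num) hxy hzρ (by norm_num) (by norm_num)).elim
                      · rcases le_total t (907/1600) with h130 | h130
                        · exact cellB ρ t z (99/64) (25/16) (101/200) (907/1600) (822649/4915200) (343/640) (12437/10000) (5/4) (1407/2000) (6581/10000) (1/10) (3657/10000) (581/1000) (79/125) (4091/10000) hρ1 ht0 hz hzρ hxy h127 h120 h0 h130 (by norm_num)
                        · rcases le_total t (1913/3200) with h131 | h131
                          · exact cellB ρ t z (99/64) (25/16) (907/1600) (1913/3200) (3659569/19660800) (3727/6400) (12437/10000) (5/4) (6581/10000) (6341/10000) (3657/10000) (2211/5000) (617/1000) (401/625) (2157/5000) hρ1 ht0 hz hzρ hxy h127 h120 h130 h131 (by norm_num)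
                          · exact (prune4 ρ t z (25/16) (1913/3200) (503/800) hρ0 h120 h131 h118 (le_of_lt ht0) (by norm_num) hxy hzρ (by norm_num) (by norm_num)).elim
                  · rcases le_total ρ (51/32) with h132 | h132
                    · rcases le_total ρ (101/64) with h133 | h133
                      · rcases le_total t (907/1600) with h134 | h134
                        · exact cellB ρ t z (25/16) (101/64) (101/200) (907/1600) (83087549/491520000) (343/640) (5/4) (12563/10000) (1407/2000) (6581/10000) (1/10) (3657/10000) (1449/2500) (6307/10000) (4111/10000) hρ1 ht0 hz hzρ hxy h120 h133 h0 h134 (by norm_num)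
                        · rcases le_total t (1913/3200) with h135 | h135
                          · exact cellB ρ t z (25/16) (101/64) (907/1600) (1913/3200) (369616469/1966080000) (3727/6400) (5/4) (12563/10000) (6581/10000) (6341/10000) (3657/10000) (2211/5000) (1231/2000) (6401/10000) (867/2000) hρ1 ht0 hz hzρ hxy h120 h133 h134 h135 (by norm_num)
                          · exact (prune4 ρ t z (101/64) (1913/3200) (503/800) hρ0 h133 h135 h118 (le_of_lt ht0) (by norm_num) hxy hzρ (by norm_num) (by norm_num)).elim
                      · rcases le_total t (907/1600) with h136 | h136
                        · exact cellB ρ t z (101/64) (51/32) (101/200) (907/1600) (13985033/81920000) (343/640) (6281/5000) (101/80) (1407/2000) (6581/10000) (1/10) (3657/10000) (5781/10000) (3147/5000) (4131/10000) hρ1 ht0 hz hzρ hxy h133 h132 h0 h136 (by norm_num)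
                        · rcases le_total t (1913/3200) with h137 | h137
                          · exact cellB ρ t z (101/64) (51/32) (907/1600) (1913/3200) (62212673/327680000) (3727/6400) (6281/5000) (101/80) (6581/10000) (6341/10000) (3657/10000) (2211/5000) (307/500) (6387/10000) (4357/10000) hρ1 ht0 hz hzρ hxy h133 h132 h136 h137 (by norm_num)
                          · exact (prune4 ρ t z (51/32) (1913/3200) (503/800) hρ0 h132 h137 h118 (le_of_lt ht0) (by norm_num) hxy hzρ (by norm_num) (by norm_num)).elim
                    · rcases le_total ρ (103/64) with h138 | h138
                      · rcases le_total t (907/1600) with h139 | h139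
                        · exact cellB ρ t z (51/32) (103/64) (101/200) (907/1600) (84732847/491520000) (343/640) (789/625) (12687/10000) (1407/2000) (6581/10000) (1/10) (3657/10000) (5767/10000) (157/250) (4151/10000) hρ1 ht0 hz hzρ hxy h132 h138 h0 h139 (by norm_num)
                        · rcases le_total t (1913/3200) with h140 | h140
                          · exact cellB ρ t z (51/32) (103/64) (907/1600) (1913/3200) (376935607/1966080000) (3727/6400) (789/625) (12687/10000) (6581/10000) (6341/10000) (3657/10000) (2211/5000) (1531/2500) (1593/2500) (2189/5000) hρ1 ht0 hz hzρ hxy h132 h138 h139 h140 (by norm_num)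
                          · exact (prune4 ρ t z (103/64) (1913/3200) (1/(51/32)) hρ0 h138 h140 (thigh ρ t (51/32) (by norm_num) h132 ht2) (le_of_lt ht0) (by norm_num) hxy hzρ (by norm_num) (by norm_num)).elim
                      · rcases le_total t (907/1600) with h141 | h141
                        · exact cellB ρ t z (103/64) (13/8) (101/200) (907/1600) (10694437/61440000) (343/640) (6343/5000) (3187/2500) (1407/2000) (6581/10000) (1/10) (3657/10000) (719/1250) (6267/10000) (1043/2500) hρ1 ht0 hz hzρ hxy h138 h119 h0 h141 (by norm_num)
                        · rcases le_total t (1913/3200) with h142 | h142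
                          · exact cellB ρ t z (103/64) (13/8) (907/1600) (1913/3200) (47574397/245760000) (3727/6400) (6343/5000) (3187/2500) (6581/10000) (6341/10000) (3657/10000) (2211/5000) (6109/10000) (6357/10000) (4399/10000) hρ1 ht0 hz hzρ hxy h138 h119 h141 h142 (by norm_num)
                          · exact (prune4 ρ t z (13/8) (1913/3200) (1/(103/64)) hρ0 h119 h142 (thigh ρ t (103/64) (by norm_num) h138 ht2) (le_of_lt ht0) (by norm_num) hxy hzρ (by norm_num) (by norm_num)).elim
                · rcases le_total ρ (27/16) with h143 | h143
                  · rcases le_total ρ (53/32) with h144 | h144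
                    · rcases le_total ρ (105/64) with h145 | h145
                      · rcases le_total t (907/1600) with h146 | h146
                        · exact cellB ρ t z (13/8) (105/64) (101/200) (907/1600) (5758543/32768000) (343/640) (12747/10000) (12809/10000) (1407/2000) (6581/10000) (1/10) (3657/10000) (2869/5000) (3127/5000) (262/625) hρ1 ht0 hz hzρ hxy h119 h145 h0 h146 (by norm_num)
                        · exact cellB ρ t z (13/8) (105/64) (907/1600) (1/(13/8)) (35/169) (24591/41600) (12747/10000) (12809/10000) (6581/10000) (6201/10000) (3657/10000) (4803/10000) (2999/5000) (6389/10000) (91/200) hρ1 ht0 hz hzρ hxy h119 h145 h146 (thigh ρ t (13/8) (by norm_num) h119 ht2) (by norm_num)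
                      · exact cellB ρ t z (105/64) (53/32) (101/200) (1/(105/64)) (6784/33075) (4681/8400) (1601/1250) (1287/1000) (1407/2000) (781/1250) (1/10) (117/250) (1369/2500) (6359/10000) (283/625) hρ1 ht0 hz hzρ hxy h145 h144 h0 (thigh ρ t (105/64) (by norm_num) h145 ht2) (by norm_num)
                    · exact cellB ρ t z (53/32) (27/16) (101/200) (1/(53/32)) (576/2809) (11753/21200) (12869/10000) (12991/10000) (1407/2000) (3147/5000) (1/10) (911/2000) (1369/2500) (3157/5000) (283/625) hρ1 ht0 hz hzρ hxy h144 h143 h0 (thigh ρ t (53/32) (by norm_num) h144 ht2) (by norm_num)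
                  · rcases le_total ρ (55/32) with h147 | h147
                    · exact cellB ρ t z (27/16) (55/32) (101/200) (1/(27/16)) (440/2187) (5927/10800) (1299/1000) (13111/10000) (1407/2000) (3191/5000) (1/10) (4303/10000) (5511/10000) (391/625) (897/2000) hρ1 ht0 hz hzρ hxy h143 h147 h0 (thigh ρ t (27/16) (by norm_num) h143 ht2) (by norm_num)
                    · exact cellB ρ t z (55/32) (7/4) (101/200) (1/(55/32)) (1792/9075) (2391/4400) (1311/1000) (13229/10000) (1407/2000) (3233/5000) (1/10) (809/2000) (1109/2000) (6199/10000) (4443/10000) hρ1 ht0 hz hzρ hxy h147 h117 h0 (thigh ρ t (55/32) (by norm_num) h147 ht2) (by norm_num)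
              · exact (prune4 ρ t z (7/4) (503/800) (1/(3/2)) hρ0 h117 h118 (thigh ρ t (3/2) (by norm_num) h50 ht2) (le_of_lt ht0) (by norm_num) hxy hzρ (by norm_num) (by norm_num)).elim
            · rcases le_total ρ (15/8) with h148 | h148
              · rcases le_total ρ (29/16) with h149 | h149
                · rcases le_total ρ (57/32) with h150 | h150
                  · exact cellB ρ t z (7/4) (57/32) (101/200) (1/(7/4)) (19/98) (1507/2800) (3307/2500) (13347/10000) (1407/2000) (3273/5000) (1/10) (3779/10000) (5577/10000) (384/625) (4403/10000) hρ1 ht0 hz hzρ hxy h117 h150 h0 (thigh ρ t (7/4) (by norm_num) h117 ht2) (by norm_num)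
                  · exact cellB ρ t z (57/32) (29/16) (101/200) (1/(57/32)) (1856/9747) (12157/22800) (6673/5000) (13463/10000) (1407/2000) (3311/5000) (1/10) (219/625) (701/1250) (609/1000) (4363/10000) hρ1 ht0 hz hzρ hxy h150 h149 h0 (thigh ρ t (57/32) (by norm_num) h150 ht2) (by norm_num)
                · rcases le_total ρ (59/32) with h151 | h151
                  · exact cellB ρ t z (29/16) (59/32) (101/200) (1/(29/16)) (472/2523) (6129/11600) (6731/5000) (13579/10000) (1407/2000) (1339/2000) (1/10) (201/625) (2819/5000) (3019/5000) (173/400) hρ1 ht0 hz hzρ hxy h149 h151 h0 (thigh ρ t (29/16) (by norm_num) h149 ht2) (by norm_num)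
                  · exact cellB ρ t z (59/32) (15/8) (101/200) (1/(59/32)) (640/3481) (12359/23600) (6789/5000) (6847/5000) (1407/2000) (1691/2500) (1/10) (2911/10000) (2833/5000) (5987/10000) (4287/10000) hρ1 ht0 hz hzρ hxy h151 h148 h0 (thigh ρ t (59/32) (by norm_num) h151 ht2) (by norm_num)
              · rcases le_total ρ (31/16) with h152 | h152
                · rcases le_total ρ (61/32) with h153 | h153
                  · exact cellB ρ t z (15/8) (61/32) (101/200) (1/(15/8)) (122/675) (623/1200) (13693/10000) (13807/10000) (1407/2000) (6831/10000) (1/10) (2581/10000) (2847/5000) (5937/10000) (4251/10000) hρ1 ht0 hz hzρ hxy h148 h153 h0 (thigh ρ t (15/8) (by norm_num) h148 ht2) (by norm_num)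
                  · exact cellB ρ t z (61/32) (31/16) (101/200) (1/(61/32)) (1984/11163) (12561/24400) (6903/5000) (174/125) (1407/2000) (3447/5000) (1/10) (2217/10000) (143/250) (5889/10000) (843/2000) hρ1 ht0 hz hzρ hxy h153 h152 h0 (thigh ρ t (61/32) (by norm_num) h153 ht2) (by norm_num)
                · rcases le_total ρ (63/32) with h154 | h154
                  · rcases le_total ρ (125/64) with h155 | h155
                    · exact cellB ρ t z (31/16) (125/64) (101/200) (1/(31/16)) (500/2883) (6331/12400) (13919/10000) (1747/1250) (1407/2000) (1739/2500) (1/10) (449/2500) (2879/5000) (2927/5000) (1041/2500) hρ1 ht0 hz hzρ hxy h152 h155 h0 (thigh ρ t (31/16) (by norm_num) h152 ht2) (by norm_num)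
                    · exact cellB ρ t z (125/64) (63/32) (101/200) (1/(125/64)) (2688/15625) (1017/2000) (559/400) (877/625) (1407/2000) (1397/2000) (1/10) (1549/10000) (577/1000) (583/1000) (4147/10000) hρ1 ht0 hz hzρ hxy h155 h154 h0 (thigh ρ t (125/64) (by norm_num) h155 ht2) (by norm_num)
                  · rcases le_total ρ (127/64) with h156 | h156
                    · exact cellB ρ t z (63/32) (127/64) (101/200) (1/(63/32)) (2032/11907) (12763/25200) (14031/10000) (14087/10000) (1407/2000) (3507/5000) (1/10) (1259/10000) (2891/5000) (5807/10000) (4131/10000) hρ1 ht0 hz hzρ hxy h154 h156 h0 (thigh ρ t (63/32) (by norm_num) h154 ht2) (by norm_num)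
                    · exact absurd (le_trans h0 (thigh ρ t (127/64) (by norm_num) h156 ht2)) (by norm_num)
        · exact absurd (le_trans h0 (thigh ρ t (2) (by norm_num) h49 ht2)) (by norm_num)
      · rcases le_total ρ (2) with h157 | h157
        · exact (prune4 ρ t z (2) (301/400) (1/(1)) hρ0 h157 h48 (thigh ρ t (1) (by norm_num) hρ1 ht2) (le_of_lt ht0) (by norm_num) hxy hzρ (by norm_num) (by norm_num)).elim
        · exact absurd (le_trans h48 (thigh ρ t (2) (by norm_num) h157 ht2)) (by norm_num)
  rw [div_le_iff₀ (by linarith : (0:ℝ) < 2 * (Real.sqrt (t - z) + Real.sqrt z + Real.sqrt (1 - t)))]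
  linarith [key]
end

section
/- Let ρ, t, z be real numbers satisfying 2 ≤ ρ ≤ 3, 0 ≤ z ≤ ρ·t²/3, and 1/3 ≤ t ≤ 1/ρ. Then (√ρ + t·√ρ + 2/√ρ + 1.5·z/(t·√ρ)) / (2·(√(t − z) + √z + √(1 − t))) ≤ (3 + ρ)/(2 + 2·√(ρ − 1)). -/
/-!
Write `√ρ · √t = X`, `√ρ · √(1 - t) = Y` and `a = √(ρ - 1)`, so that `X² + Y² = ρ = a² + 1`.
For `z = 0` the cross-multiplied claim becomes the polynomial inequality
`(2X² + Y² + 2)(1 + a) ≤ (X² + Y² + 3)(X + Y)`, which is an equality at `X = 1`, i.e. `t = 1/ρ`;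
multiplied by `Y + a`, the gap factors as `(1 - X)` times a cubic that is nonnegative on the
admissible region. Splitting off `R_z` raises the numerator by `1.5 z / (t √ρ) ≤ √z`, while
the denominator gains `√(t - z) + √z - √t ≥ √z / 2`; since `1 + √(ρ - 1) ≤ (3 + ρ) / 2`,
the gain pays for the cost.
-/

open Real

theorem two_piece_poly_bound {X Y a : ℝ} (hX0 : 0 ≤ X) (hX1 : X ≤ 1) (hY0 : 0 ≤ Y)
    (ha1 : 1 ≤ a) (hYX : Y ^ 2 ≤ 2 * X ^ 2) (ha : a ^ 2 = X ^ 2 + Y ^ 2 - 1) :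
    (2 * X ^ 2 + Y ^ 2 + 2) * (1 + a) ≤ (X ^ 2 + Y ^ 2 + 3) * (X + Y) := by
  have haY : a ≤ Y := by nlinarith
  have hG : 0 ≤ (1 + a) * (1 + X) * (Y + a) - (Y + a - 1 - X) * (a ^ 2 + 4) := by
    nlinarith [sq_nonneg (Y - a), sq_nonneg (a - 1), mul_nonneg hX0 (sub_nonneg.2 haY)]
  have hfactor : ((X ^ 2 + Y ^ 2 + 3) * (X + Y) - (2 * X ^ 2 + Y ^ 2 + 2) * (1 + a)) * (Y + a)
      = (1 - X) * ((1 + a) * (1 + X) * (Y + a) - (Y + a - 1 - X) * (a ^ 2 + 4)) := by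
    linear_combination ((1 - X) * (Y + a - 1 - X) - (X ^ 2 + Y ^ 2 + 3)) * ha
  have hprod : 0 ≤ ((X ^ 2 + Y ^ 2 + 3) * (X + Y) - (2 * X ^ 2 + Y ^ 2 + 2) * (1 + a)) * (Y + a) :=
    hfactor ▸ mul_nonneg (sub_nonneg.2 hX1) hG
  exact sub_nonneg.1 (nonneg_of_mul_nonneg_left hprod (by linarith))

theorem two_piece_bound {ρ t : ℝ} (hρ : 2 ≤ ρ) (ht : 1 / 3 ≤ t) (hρt : ρ * t ≤ 1) :
    (√ρ + t * √ρ + 2 / √ρ) * (1 + √(ρ - 1)) ≤ (3 + ρ) * (√t + √(1 - t)) := by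
  have hs : 0 < √ρ := sqrt_pos.2 (by linarith)
  have hρs : √ρ ^ 2 = ρ := sq_sqrt (by linarith)
  have ht_le_one : t ≤ 1 := by nlinarith
  have hX : (√ρ * √t) ^ 2 = ρ * t := by rw [mul_pow, hρs, sq_sqrt (by linarith)]
  have hY : (√ρ * √(1 - t)) ^ 2 = ρ * (1 - t) := by rw [mul_pow, hρs, sq_sqrt (by linarith)]
  have ha : √(ρ - 1) ^ 2 = ρ - 1 := sq_sqrt (by linarith)
  have key := two_piece_poly_bound (X := √ρ * √t) (Y := √ρ * √(1 - t)) (a := √(ρ - 1))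
    (by positivity) (by nlinarith) (by positivity) (one_le_sqrt.2 (by linarith)) (by nlinarith)
    (by rw [hX, hY, ha]; ring)
  rw [hX, hY] at key
  refine le_of_mul_le_mul_right ?_ hs
  calc (√ρ + t * √ρ + 2 / √ρ) * (1 + √(ρ - 1)) * √ρ
      = (2 * (ρ * t) + ρ * (1 - t) + 2) * (1 + √(ρ - 1)) := by
        field_simp
        rw [hρs]
        ring
    _ ≤ (ρ * t + ρ * (1 - t) + 3) * (√ρ * √t + √ρ * √(1 - t)) := key
    _ = (3 + ρ) * (√t + √(1 - t)) * √ρ := by ring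

theorem sqrt_le_sqrt_sub_add_half_sqrt {t z : ℝ} (hz : 0 ≤ z) (hzt : 25 * z ≤ 16 * t) :
    √t ≤ √(t - z) + √z / 2 := by
  have hr : 3 / 4 * √z ≤ √(t - z) :=
    (le_sqrt (by positivity) (by linarith)).2 (by rw [mul_pow, sq_sqrt hz]; linarith)
  rw [sqrt_le_iff]
  refine ⟨by positivity, ?_⟩
  nlinarith [mul_le_mul_of_nonneg_right hr (sqrt_nonneg z), sq_sqrt hz,
    sq_sqrt (by linarith : 0 ≤ t - z)]

theorem split_term_bound {ρ t z : ℝ} (hρ : 0 < ρ) (ht : 0 < t) (hz : 0 ≤ z)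
    (hzρ : 9 * z ≤ 4 * ρ * t ^ 2) (hzt : 25 * z ≤ 16 * t) :
    1.5 * z / (t * √ρ) * (1 + √(ρ - 1)) ≤ (3 + ρ) * (√(t - z) + √z - √t) := by
  have hcost : 1.5 * z / (t * √ρ) ≤ √z := by
    have hw : 1.5 * √z ≤ t * √ρ := by
      nlinarith [sq_sqrt hz, sq_sqrt hρ.le, sqrt_nonneg z, mul_pos ht (sqrt_pos.2 hρ)]
    rw [div_le_iff₀ (by positivity)]
    nlinarith [sq_sqrt hz, sqrt_nonneg z]
  have hcoeff : 1 + √(ρ - 1) ≤ (3 + ρ) / 2 := by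
    have : √(ρ - 1) ≤ ρ / 2 := sqrt_le_iff.2 ⟨by positivity, by nlinarith [sq_nonneg (ρ - 2)]⟩
    linarith
  have hgain := sqrt_le_sqrt_sub_add_half_sqrt hz hzt
  calc 1.5 * z / (t * √ρ) * (1 + √(ρ - 1)) ≤ √z * ((3 + ρ) / 2) :=
        mul_le_mul hcost hcoeff (by positivity) (sqrt_nonneg z)
    _ ≤ (3 + ρ) * (√(t - z) + √z - √t) := by nlinarith

theorem case1_factor_bound_rho_ge_two_general
    (ρ t z : ℝ)
    (hρ1 : 2 ≤ ρ)
    (hz1 : 0 ≤ z) (hz2 : z ≤ ρ * t ^ 2 / 3)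
    (ht1 : 1 / 3 ≤ t) (ht2 : t ≤ 1 / ρ) :
    (Real.sqrt ρ + t * Real.sqrt ρ + 2 / Real.sqrt ρ + 1.5 * z / (t * Real.sqrt ρ))
      / (2 * (Real.sqrt (t - z) + Real.sqrt z + Real.sqrt (1 - t)))
      ≤ (3 + ρ) / (2 + 2 * Real.sqrt (ρ - 1)) := by
  have hρt : ρ * t ≤ 1 := by rwa [le_div_iff₀ (by linarith), mul_comm] at ht2
  have htwo := two_piece_bound hρ1 ht1 hρt
  have hsplit := split_term_bound (ρ := ρ) (t := t) (by linarith) (by linarith) hz1 (by nlinarith) (by nlinarith)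
  have hv : 0 < √(1 - t) := sqrt_pos.2 (by nlinarith)
  rw [div_le_div_iff₀ (by positivity) (by positivity)]
  linear_combination 2 * htwo + 2 * hsplit

theorem case1_factor_bound_rho_ge_two
    (ρ t z : ℝ)
    (hρ1 : 2 ≤ ρ) (hρ2 : ρ ≤ 3)
    (hz1 : 0 ≤ z) (hz2 : z ≤ ρ * t ^ 2 / 3)
    (ht1 : 1 / 3 ≤ t) (ht2 : t ≤ 1 / ρ) :
    (Real.sqrt ρ + t * Real.sqrt ρ + 2 / Real.sqrt ρ + 1.5 * z / (t * Real.sqrt ρ))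
      / (2 * (Real.sqrt (t - z) + Real.sqrt z + Real.sqrt (1 - t)))
      ≤ (3 + ρ) / (2 + 2 * Real.sqrt (ρ - 1)) :=
  case1_factor_bound_rho_ge_two_general ρ t z hρ1 hz1 hz2 ht1 ht2
end

section
/- For every real number ρ with 2 ≤ ρ ≤ 3, one has (√ρ + 3/√ρ + 4·√0.11 + 3·√0.165) / (2·(1/√ρ + √(1 − 1/ρ)) + 4·√0.33) ≤ 1.19. -/
lemma compound_core (a b u v w ρ : ℝ) (hρ1 : 2 ≤ ρ) (hρ2 : ρ ≤ 3)
    (ha : 0 < a) (ha2 : a ^ 2 = ρ)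
    (hb0 : 0 ≤ b) (hb2 : b ^ 2 = ρ - 1)
    (hu0 : 0 ≤ u) (hu2 : u ^ 2 = 0.11)
    (hv0 : 0 ≤ v) (hv2 : v ^ 2 = 0.165)
    (hw0 : 0 ≤ w) (hw2 : w ^ 2 = 0.33) :
    a * a + 3 + (4 * u + 3 * v) * a ≤ 1.19 * (2 * (1 + b) + 4 * w * a) := by
  have hu1 : u ≤ 0.33167 := by nlinarith [sq_nonneg (u - 0.33167)]
  have hv1 : v ≤ 0.40621 := by nlinarith [sq_nonneg (v - 0.40621)]
  have hw1 : 0.57445 ≤ w := by nlinarith [sq_nonneg (w - 0.57445)]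
  have hb1 : 1 ≤ b := by nlinarith
  have hbu : b ≤ 1.43902 := by nlinarith
  have hprod : 0 ≤ (b - 1) * (1.43902 - b) :=
    mul_nonneg (by linarith) (by linarith)
  have hblin : 1 + 0.41 * (ρ - 2) ≤ b := by nlinarith [hprod]
  have ha1 : 1.4142 ≤ a := by nlinarith
  have hau : a ≤ 1.7321 := by nlinarith
  nlinarith [mul_le_mul_of_nonneg_right hu1 ha.le,
    mul_le_mul_of_nonneg_right hv1 ha.le,
    mul_le_mul_of_nonneg_right hw1 ha.le,
    mul_le_mul_of_nonneg_left ha1 (by linarith : (0:ℝ) ≤ 0.57445)]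

theorem compound_sibling_bound_rho_ge_two
    (ρ : ℝ) (hρ1 : 2 ≤ ρ) (hρ2 : ρ ≤ 3) :
    (Real.sqrt ρ + 3 / Real.sqrt ρ + 4 * Real.sqrt 0.11 + 3 * Real.sqrt 0.165)
      / (2 * (1 / Real.sqrt ρ + Real.sqrt (1 - 1 / ρ)) + 4 * Real.sqrt 0.33) ≤ 1.19 := by
  have hρ0 : (0:ℝ) < ρ := by linarith
  set a := Real.sqrt ρ with ha_def
  set b := Real.sqrt (ρ - 1) with hb_def
  set u := Real.sqrt 0.11 with hu_def
  set v := Real.sqrt 0.165 with hv_def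
  set w := Real.sqrt 0.33 with hw_def
  have ha : 0 < a := Real.sqrt_pos.mpr hρ0
  have ha2 : a ^ 2 = ρ := Real.sq_sqrt hρ0.le
  have hb0 : 0 ≤ b := Real.sqrt_nonneg _
  have hb2 : b ^ 2 = ρ - 1 := Real.sq_sqrt (by linarith)
  have hu0 : 0 ≤ u := Real.sqrt_nonneg _
  have hu2 : u ^ 2 = 0.11 := Real.sq_sqrt (by norm_num)
  have hv0 : 0 ≤ v := Real.sqrt_nonneg _
  have hv2 : v ^ 2 = 0.165 := Real.sq_sqrt (by norm_num)
  have hw0 : 0 ≤ w := Real.sqrt_nonneg _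
  have hw2 : w ^ 2 = 0.33 := Real.sq_sqrt (by norm_num)
  have hsd : Real.sqrt (1 - 1 / ρ) = b / a := by
    rw [show (1 - 1/ρ) = (ρ - 1)/ρ by field_simp, Real.sqrt_div (by linarith)]
  rw [hsd]
  have key := compound_core a b u v w ρ hρ1 hρ2 ha ha2 hb0 hb2 hu0 hu2 hv0 hv2 hw0 hw2
  have hane : a ≠ 0 := ne_of_gt ha
  have hden : 0 < 2 * (1 / a + b / a) + 4 * w := by
    have hw1 : 0 < w := Real.sqrt_pos.mpr (by norm_num)
    positivity
  rw [div_le_iff₀ hden, ← mul_le_mul_iff_of_pos_right ha]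
  calc (a + 3 / a + 4 * u + 3 * v) * a = a * a + 3 + (4 * u + 3 * v) * a := by
        field_simp; ring
    _ ≤ 1.19 * (2 * (1 + b) + 4 * w * a) := key
    _ = 1.19 * (2 * (1 / a + b / a) + 4 * w) * a := by field_simp
end

section
/- Let ρ and A be real numbers with 1 ≤ ρ ≤ 2 and 0.5 ≤ A ≤ 3/ρ − 1. Then (1.5·√ρ + 2/√ρ + A·√ρ + 1/√ρ) / (2·√2 + 2·√A) ≤ 1.203. -/
/-!
Write `s = √ρ`, `t = √A`. Clearing the denominator `s` turns the claim into the polynomial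
inequality `1.5 s² + 3 + s² t² ≤ 1.203 (2√2 + 2t) s`, and with `√2 ≥ 1.414` it suffices to prove
`1.5 s² + 3 + s² t² ≤ 3.402 s + 2.406 s t` on the region `s ≥ 1`, `t ≥ 0.707`, `s² (1 + t²) ≤ 3`
cut out by the hypotheses, where it is a nonnegative combination of products of the constraints.
-/

open Real

lemma sibling_poly_bound {s t : ℝ} (hs : 1 ≤ s) (ht : 0.707 ≤ t)
    (hst : s ^ 2 * (1 + t ^ 2) ≤ 3) :
    1.5 * s ^ 2 + 3 + t ^ 2 * s ^ 2 ≤ 3.402 * s + 2.406 * (s * t) := by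
  nlinarith [mul_nonneg (sub_nonneg.mpr hs) (sub_nonneg.mpr ht),
    sq_nonneg (s - 1), sq_nonneg (s * t - 1), sq_nonneg (s * t - 0.707),
    mul_nonneg (sub_nonneg.mpr hs) (sq_nonneg (s * t - 1)),
    mul_nonneg (sub_nonneg.mpr ht) (sq_nonneg (s - 1))]

lemma sibling_ratio_le {s t r : ℝ} (hs : 1 ≤ s) (ht : 0.707 ≤ t)
    (hst : s ^ 2 * (1 + t ^ 2) ≤ 3) (hr : 1.414 ≤ r) :
    (1.5 * s + 2 / s + t ^ 2 * s + 1 / s) / (2 * r + 2 * t) ≤ 1.203 := by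
  have hs0 : 0 < s := by linarith
  have hnum : 1.5 * s + 2 / s + t ^ 2 * s + 1 / s = (1.5 * s ^ 2 + 3 + t ^ 2 * s ^ 2) / s := by
    field_simp
    ring
  have hrs : 1.414 * s ≤ r * s := mul_le_mul_of_nonneg_right hr hs0.le
  rw [hnum, div_div, div_le_iff₀ (by positivity)]
  nlinarith [sibling_poly_bound hs ht hst]

theorem simple_sibling_side_bound_general
    (ρ A : ℝ) (hρ1 : 1 ≤ ρ)
    (hA1 : 0.5 ≤ A) (hA2 : A ≤ 3 / ρ - 1) :
    (1.5 * Real.sqrt ρ + 2 / Real.sqrt ρ + A * Real.sqrt ρ + 1 / Real.sqrt ρ)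
      / (2 * Real.sqrt 2 + 2 * Real.sqrt A) ≤ 1.203 := by
  have hρ0 : 0 < ρ := by linarith
  have hA0 : 0 ≤ A := by norm_num at hA1 ⊢; linarith
  have hρA : (1 + A) * ρ ≤ 3 := by
    rw [le_sub_iff_add_le, le_div_iff₀ hρ0] at hA2
    linarith
  have hs : 1 ≤ √ρ := one_le_sqrt.mpr hρ1
  have ht : 0.707 ≤ √A := (le_sqrt (by norm_num) hA0).mpr (by norm_num at hA1 ⊢; linarith)
  have hst : √ρ ^ 2 * (1 + √A ^ 2) ≤ 3 := by rw [sq_sqrt hρ0.le, sq_sqrt hA0]; linarith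
  have hr : 1.414 ≤ √2 := (le_sqrt (by norm_num) (by norm_num)).mpr (by norm_num)
  simpa only [sq_sqrt hA0] using sibling_ratio_le hs ht hst hr

theorem simple_sibling_side_bound
    (ρ A : ℝ) (hρ1 : 1 ≤ ρ) (hρ2 : ρ ≤ 2)
    (hA1 : 0.5 ≤ A) (hA2 : A ≤ 3 / ρ - 1) :
    (1.5 * Real.sqrt ρ + 2 / Real.sqrt ρ + A * Real.sqrt ρ + 1 / Real.sqrt ρ)
      / (2 * Real.sqrt 2 + 2 * Real.sqrt A) ≤ 1.203 :=
  simple_sibling_side_bound_general ρ A hρ1 hA1 hA2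
end

section
/- Let ρ and A be real numbers with 1 ≤ ρ ≤ 2 and max(0.5, ρ − 1) ≤ A ≤ 3ρ − 1. Then (1.5·√ρ + 2/√ρ + √ρ + A/√ρ) / (2·√2 + 2·√A) ≤ 1.203. -/
/-!
After multiplying out the denominators the claim reads
`2.5 ρ + 2 + A ≤ 2.406 √ρ (√2 + √A)`. For fixed `ρ` this is a convex quadratic inequality in
`√A`, so it only has to be checked at the extreme admissible values `A = max (1/2) (ρ - 1)` and
`A = 3ρ - 1`, which leaves three one-variable inequalities. The constant `1.203` is nearly sharp:
at `ρ = 3/2`, `A = 1/2` the two sides differ by about `10⁻³`.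
-/

open Real

def SiblingBound (ρ A : ℝ) : Prop := 2.5 * ρ + 2 + A ≤ 2.406 * √ρ * (√2 + √A)

lemma sq_add_mul_add_nonpos_of_mem_Icc {β γ a b t : ℝ} (hat : a ≤ t) (htb : t ≤ b)
    (ha : a ^ 2 + β * a + γ ≤ 0) (hb : b ^ 2 + β * b + γ ≤ 0) :
    t ^ 2 + β * t + γ ≤ 0 := by
  have hchord : t ^ 2 ≤ (a + b) * t - a * b := by
    nlinarith [mul_nonneg (sub_nonneg.2 hat) (sub_nonneg.2 htb)]
  rcases le_total 0 (a + b + β) with h | h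
  · nlinarith [mul_nonneg h (sub_nonneg.2 htb)]
  · nlinarith [mul_nonneg (neg_nonneg.2 h) (sub_nonneg.2 hat)]

lemma siblingBound_of_mem_Icc {ρ A₁ A A₂ : ℝ} (h₀ : 0 ≤ A₁) (h₁ : A₁ ≤ A) (h₂ : A ≤ A₂)
    (hb₁ : SiblingBound ρ A₁) (hb₂ : SiblingBound ρ A₂) : SiblingBound ρ A := by
  have hquad {B : ℝ} (hB : 0 ≤ B) (hb : SiblingBound ρ B) :
      √B ^ 2 + (-2.406 * √ρ) * √B + (2.5 * ρ + 2 - 2.406 * √ρ * √2) ≤ 0 := by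
    rw [sq_sqrt hB]; unfold SiblingBound at hb; linarith
  have h := sq_add_mul_add_nonpos_of_mem_Icc (sqrt_le_sqrt h₁) (sqrt_le_sqrt h₂)
    (hquad h₀ hb₁) (hquad (h₀.trans (h₁.trans h₂)) hb₂)
  rw [sq_sqrt (h₀.trans h₁)] at h
  unfold SiblingBound; linarith

lemma sqrt_two_gt_d5 : (1.41421 : ℝ) < √2 := by
  rw [lt_sqrt (by norm_num)]; norm_num

lemma siblingBound_half {ρ : ℝ} (h₁ : 1 ≤ ρ) (h₂ : ρ ≤ 3 / 2) : SiblingBound ρ (1 / 2) := by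
  have hs := sq_sqrt (show 0 ≤ ρ by linarith)
  have ha := sq_sqrt (show (0 : ℝ) ≤ 1 / 2 by norm_num)
  have hs₁ : 1 ≤ √ρ := by nlinarith [sqrt_nonneg ρ]
  have hs₂ : √ρ ≤ 1.22475 := by nlinarith [sqrt_nonneg ρ]
  have ha₁ : 0.7071 ≤ √(1 / 2 : ℝ) := by nlinarith [sqrt_nonneg (1 / 2 : ℝ)]
  unfold SiblingBound
  nlinarith [mul_nonneg (sub_nonneg.2 hs₁) (sub_nonneg.2 hs₂),
    mul_nonneg (sqrt_nonneg ρ) (sub_nonneg.2 sqrt_two_gt_d5.le),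
    mul_nonneg (sqrt_nonneg ρ) (sub_nonneg.2 ha₁)]

lemma siblingBound_sub_one {ρ : ℝ} (h₁ : 3 / 2 ≤ ρ) (h₂ : ρ ≤ 2) : SiblingBound ρ (ρ - 1) := by
  have hs := sq_sqrt (show 0 ≤ ρ by linarith)
  have hv := sq_sqrt (show 0 ≤ ρ - 1 by linarith)
  have hs₁ : 1.22474 ≤ √ρ := by nlinarith [sqrt_nonneg ρ]
  have hs₂ : √ρ ≤ 1.41422 := by nlinarith [sqrt_nonneg ρ]
  have hv₁ : 0.7071 ≤ √(ρ - 1) := by nlinarith [sqrt_nonneg (ρ - 1)]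
  unfold SiblingBound
  nlinarith [mul_nonneg (sub_nonneg.2 hs₁) (sub_nonneg.2 hs₂),
    mul_nonneg (sub_nonneg.2 hs₁) (sub_nonneg.2 hv₁),
    mul_nonneg (sub_nonneg.2 hs₁) (sub_nonneg.2 sqrt_two_gt_d5.le),
    sq_nonneg (√(ρ - 1) - √ρ)]

lemma siblingBound_three_mul_sub_one {ρ : ℝ} (h₁ : 1 ≤ ρ) (h₂ : ρ ≤ 2) :
    SiblingBound ρ (3 * ρ - 1) := by
  have hs := sq_sqrt (show 0 ≤ ρ by linarith)
  have hw := sq_sqrt (show 0 ≤ 3 * ρ - 1 by linarith)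
  have hs₁ : 1 ≤ √ρ := by nlinarith [sqrt_nonneg ρ]
  have hs₂ : √ρ ≤ 1.4143 := by nlinarith [sqrt_nonneg ρ]
  have hw₁ : 1.75 * √ρ - 0.34 ≤ √(3 * ρ - 1) := by nlinarith [sqrt_nonneg (3 * ρ - 1)]
  unfold SiblingBound
  nlinarith [mul_nonneg (sub_nonneg.2 hs₁) (sub_nonneg.2 hs₂),
    mul_nonneg (sqrt_nonneg ρ) (sub_nonneg.2 hw₁),
    mul_nonneg (sqrt_nonneg ρ) (sub_nonneg.2 sqrt_two_gt_d5.le)]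

lemma div_le_of_siblingBound {ρ A : ℝ} (hρ : 0 < ρ) (h : SiblingBound ρ A) :
    (1.5 * √ρ + 2 / √ρ + √ρ + A / √ρ) / (2 * √2 + 2 * √A) ≤ 1.203 := by
  have hs : 0 < √ρ := sqrt_pos.2 hρ
  have hden : 0 < 2 * √2 + 2 * √A := by positivity
  have hnum : 1.5 * √ρ + 2 / √ρ + √ρ + A / √ρ = (2.5 * ρ + 2 + A) / √ρ := by
    field_simp
    rw [sq_sqrt hρ.le]; ring
  rw [div_le_iff₀ hden, hnum, div_le_iff₀ hs]
  unfold SiblingBound at h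
  linarith

theorem simple_sibling_top_bound_rho_le_two
    (ρ A : ℝ) (hρ1 : 1 ≤ ρ) (hρ2 : ρ ≤ 2)
    (hA1 : max 0.5 (ρ - 1) ≤ A) (hA2 : A ≤ 3 * ρ - 1) :
    (1.5 * Real.sqrt ρ + 2 / Real.sqrt ρ + Real.sqrt ρ + A / Real.sqrt ρ)
      / (2 * Real.sqrt 2 + 2 * Real.sqrt A) ≤ 1.203 := by
  obtain ⟨hA_half, hA_sub⟩ := max_le_iff.1 hA1
  refine div_le_of_siblingBound (by linarith) ?_
  have htop := siblingBound_three_mul_sub_one hρ1 hρ2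
  rcases le_total ρ (3 / 2) with hρ | hρ
  · exact siblingBound_of_mem_Icc (by norm_num) (by linarith) hA2 (siblingBound_half hρ1 hρ) htop
  · exact siblingBound_of_mem_Icc (by linarith) hA_sub hA2 (siblingBound_sub_one hρ hρ2) htop
end

section
/- Let ρ and A be real numbers with 2 ≤ ρ ≤ 3 and max(0.5, ρ − 1) ≤ A ≤ 3ρ − 1. Then (√ρ + 3/√ρ + √ρ + A/√ρ) / (2·(1/√ρ + √(1 − 1/ρ)) + 2·√A) ≤ 1.203. -/
/-!
Multiplying numerator and denominator by `√ρ` and writing `ρ = u² + 1` with `u = √(ρ - 1)`,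
the bound becomes `A + 2u² - 2.406u + 2.594 ≤ 2.406 √(ρA)`. It suffices to compare squares,
which on the range `1 ≤ u ≤ √2`, `u² ≤ A ≤ 3u² + 2` is a polynomial inequality in `u` and `A`
certified by products of the constraints.
-/

open Real

lemma Real.sqrt_one_sub_one_div {ρ : ℝ} (hρ : 0 < ρ) : √(1 - 1 / ρ) = √(ρ - 1) / √ρ := by
  rw [← Real.sqrt_div' _ hρ.le, sub_div, div_self hρ.ne']

lemma perimeter_ratio_eq {ρ : ℝ} (A : ℝ) (hρ : 0 < ρ) :
    (√ρ + 3 / √ρ + √ρ + A / √ρ) / (2 * (1 / √ρ + √(1 - 1 / ρ)) + 2 * √A)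
      = (2 * ρ + 3 + A) / (2 * (1 + √(ρ - 1) + √(ρ * A))) := by
  have hs : 0 < √ρ := Real.sqrt_pos.2 hρ
  rw [Real.sqrt_one_sub_one_div hρ, Real.sqrt_mul hρ.le, ← mul_div_mul_right _ _ hs.ne']
  congr 1
  · field_simp
    rw [Real.sq_sqrt hρ.le]
    ring
  · field_simp

lemma sibling_polynomial_bound {u A : ℝ} (hu1 : 1 ≤ u) (hu2 : u ^ 2 ≤ 2)
    (hA1 : u ^ 2 ≤ A) (hA2 : A ≤ 3 * u ^ 2 + 2) :
    (A + 2 * u ^ 2 - 2.406 * u + 2.594) ^ 2 ≤ 2.406 ^ 2 * ((u ^ 2 + 1) * A) := by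
  nlinarith [mul_nonneg (sub_nonneg.2 hA1) (sub_nonneg.2 hA2), sq_nonneg (u - 1),
    sq_nonneg (u ^ 2 - 1),
    mul_nonneg (mul_nonneg (sub_nonneg.2 hu1) (sub_nonneg.2 hu1)) (sub_nonneg.2 hu2),
    mul_nonneg (sub_nonneg.2 hA1) (sub_nonneg.2 hu1),
    mul_nonneg (sub_nonneg.2 hA2) (sub_nonneg.2 hu1)]

lemma sibling_numerator_le {ρ A : ℝ} (hρ1 : 2 ≤ ρ) (hρ2 : ρ ≤ 3)
    (hA1 : ρ - 1 ≤ A) (hA2 : A ≤ 3 * ρ - 1) :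
    2 * ρ + 3 + A ≤ 2.406 * (1 + √(ρ - 1) + √(ρ * A)) := by
  set u := √(ρ - 1)
  have hu : u ^ 2 = ρ - 1 := Real.sq_sqrt (by linarith)
  have hu1 : 1 ≤ u := Real.le_sqrt_of_sq_le (by linarith)
  have hsq := sibling_polynomial_bound (A := A) hu1 (by linarith) (by linarith) (by linarith)
  rw [show u ^ 2 + 1 = ρ by linarith] at hsq
  have hroot : A + 2 * u ^ 2 - 2.406 * u + 2.594 ≤ 2.406 * √(ρ * A) := by
    calc A + 2 * u ^ 2 - 2.406 * u + 2.594 ≤ √(2.406 ^ 2 * (ρ * A)) :=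
          (le_abs_self _).trans (Real.abs_le_sqrt hsq)
      _ = 2.406 * √(ρ * A) := by
          rw [Real.sqrt_mul (by positivity), Real.sqrt_sq (by norm_num)]
  linarith

theorem simple_sibling_top_bound_rho_ge_two
    (ρ A : ℝ) (hρ1 : 2 ≤ ρ) (hρ2 : ρ ≤ 3)
    (hA1 : max 0.5 (ρ - 1) ≤ A) (hA2 : A ≤ 3 * ρ - 1) :
    (Real.sqrt ρ + 3 / Real.sqrt ρ + Real.sqrt ρ + A / Real.sqrt ρ)
      / (2 * (1 / Real.sqrt ρ + Real.sqrt (1 - 1 / ρ)) + 2 * Real.sqrt A) ≤ 1.203 := by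
  rw [perimeter_ratio_eq A (by linarith), div_le_iff₀ (by positivity)]
  linarith [sibling_numerator_le hρ1 hρ2 ((le_max_right _ _).trans hA1) hA2]
end

section
/- Let ρ, t, z be real numbers satisfying 2 ≤ ρ ≤ 3, 0 ≤ z ≤ 1/(3ρ), z ≥ max(0, 2t − 1), 1/ρ ≤ t, and z ≤ t ≤ 1. Then (3/√ρ + √ρ + 1.5·√ρ·z) / (2·(√(t − z) + √(1 − t) + √z)) ≤ (3/√ρ + √ρ) / (2·(√(1/ρ) + √(1 − 1/ρ))). -/
private lemma aux_sq_le {x y : ℝ} (hx : 0 ≤ x) (hy : 0 ≤ y) (h : x ^ 2 ≤ y ^ 2) :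
    x ≤ y := by
  nlinarith [sq_nonneg (x - y), sq_nonneg (x + y)]

private lemma prod_ineq {u t z : ℝ} (h1 : u ≤ t) (h2 : 2 * t - 1 ≤ z) (h3 : u ≤ 1 / 2) :
    (u - z) * (1 - u) ≤ (t - z) * (1 - t) := by
  nlinarith [mul_nonneg (by linarith : (0:ℝ) ≤ t - u) (by linarith : (0:ℝ) ≤ 1 + z - t - u)]

set_option maxHeartbeats 1000000 in
private lemma key_ineq (s r q a b c w : ℝ)
    (hs : 0 < s) (hr : 0 < r) (hq : 0 < q)
    (ha : 0 ≤ a) (hb : 0 ≤ b) (hc : 0 ≤ c) (hw : 0 ≤ w)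
    (hrs : r * s = 1)
    (hs2l : 2 ≤ s ^ 2) (hs2u : s ^ 2 ≤ 3)
    (hq2 : q ^ 2 = 1 - r ^ 2)
    (hzb : c ^ 2 ≤ r ^ 2 / 3)
    (hw2 : w ^ 2 = r ^ 2 - c ^ 2)
    (habs : w + q ≤ a + b) :
    (3 * r + s + 3 / 2 * s * c ^ 2) * (2 * (r + q)) ≤ (3 * r + s) * (2 * (a + b + c)) := by
  -- basic bounds
  have hsl : (7:ℝ) / 5 ≤ s := aux_sq_le (by norm_num) hs.le (by nlinarith)
  have hsu : s ≤ (7:ℝ) / 4 := aux_sq_le hs.le (by norm_num) (by nlinarith)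
  have hrl : (4:ℝ) / 7 ≤ r := by nlinarith [mul_nonneg hr.le (sub_nonneg.mpr hsu)]
  have hru : r ≤ (5:ℝ) / 7 := by nlinarith [mul_nonneg hr.le (sub_nonneg.mpr hsl)]
  -- w ≥ (4/5) r  and  r - w ≤ (5/9) s c²
  have hw8 : 4 / 5 * r ≤ w := aux_sq_le (by positivity) hw (by nlinarith)
  have hwr : w ≤ r := aux_sq_le hw hr.le (by nlinarith [sq_nonneg c])
  have h1 : (r - w) * (9 / 5 * r) ≤ c ^ 2 := by
    nlinarith [mul_nonneg (by linarith : (0:ℝ) ≤ r - w) (by linarith : (0:ℝ) ≤ w - 4 / 5 * r)]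
  have e_w : s * (r * w) = w := by
    rw [show s * (r * w) = (r * s) * w by ring, hrs, one_mul]
  have e_r : s * (r * r) = r := by
    rw [show s * (r * r) = (r * s) * r by ring, hrs, one_mul]
  have hrw : r - w ≤ 5 / 9 * s * c ^ 2 := by
    have h2 := mul_le_mul_of_nonneg_left h1 hs.le
    nlinarith [e_w, e_r, h2]
  -- r + q ≤ 71/50
  have hrq : r * q ≤ 1 / 2 :=
    aux_sq_le (by positivity) (by norm_num) (by nlinarith [sq_nonneg (r ^ 2 - q ^ 2)])
  have hK : r + q ≤ (71:ℝ) / 50 :=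
    aux_sq_le (by positivity) (by norm_num) (by nlinarith)
  -- s c ≤ 3/5 and c ≤ 3/7
  have hsc : s * c ≤ 3 / 5 := by
    have : (s * c) ^ 2 ≤ (3 / 5 : ℝ) ^ 2 := by
      have h3 : s ^ 2 * c ^ 2 ≤ s ^ 2 * (r ^ 2 / 3) :=
        mul_le_mul_of_nonneg_left hzb (by positivity)
      nlinarith [sq_nonneg (r * s)]
    exact aux_sq_le (by positivity) (by norm_num) this
  have hcb : c ≤ 3 / 7 := by nlinarith [mul_le_mul_of_nonneg_left hsl hc]
  -- bracket
  have e1 : (3 * r + s) * s = 3 + s ^ 2 := by linear_combination 3 * hrs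
  have h6 : (3 * r + s) * s ≤ 6 := by rw [e1]; linarith
  have hb1 : (3 * r + s) * s * c ≤ 6 * (3 / 7) :=
    mul_le_mul h6 hcb hc (by norm_num)
  have hb2 : (s * c) * (r + q) ≤ (3 / 5) * (71 / 50) :=
    mul_le_mul hsc hK (by positivity) (by norm_num)
  have bracket : 0 ≤ (3 * r + s) - 5 / 9 * ((3 * r + s) * s) * c - 3 / 2 * (s * c) * (r + q) := by
    nlinarith
  have key : 3 / 2 * s * c ^ 2 * (r + q) ≤ (3 * r + s) * (c - 5 / 9 * s * c ^ 2) := by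
    nlinarith [mul_nonneg hc bracket]
  have step1 : (3 * r + s) * (w + q + c) ≤ (3 * r + s) * (a + b + c) :=
    mul_le_mul_of_nonneg_left (by linarith) (by positivity)
  have step2 : (3 * r + s) * ((r + q + c) - 5 / 9 * s * c ^ 2) ≤ (3 * r + s) * (w + q + c) :=
    mul_le_mul_of_nonneg_left (by linarith) (by positivity)
  nlinarith [step1, step2, key]

set_option maxHeartbeats 1000000 in
theorem case2_bound_rho_ge_two
    (ρ t z : ℝ)
    (hρ1 : 2 ≤ ρ) (hρ2 : ρ ≤ 3)
    (hz0 : 0 ≤ z) (hz1 : z ≤ 1 / (3 * ρ))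
    (hz2 : z ≥ max 0 (2 * t - 1))
    (ht1 : 1 / ρ ≤ t) (ht2 : z ≤ t) (ht3 : t ≤ 1) :
    (3 / Real.sqrt ρ + Real.sqrt ρ + 1.5 * Real.sqrt ρ * z)
      / (2 * (Real.sqrt (t - z) + Real.sqrt (1 - t) + Real.sqrt z))
      ≤ (3 / Real.sqrt ρ + Real.sqrt ρ)
          / (2 * (Real.sqrt (1 / ρ) + Real.sqrt (1 - 1 / ρ))) := by
  have hρ0 : (0:ℝ) < ρ := by linarith
  have htz : 2 * t - 1 ≤ z := le_of_max_le_right hz2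
  have hinv : 1 / ρ ≤ 1 / 2 := by
    rw [div_le_div_iff₀ hρ0 (by norm_num)]; linarith
  have hinv0 : 0 < 1 / ρ := by positivity
  have hz1' : z ≤ 1 / ρ / 3 := by
    have h : 1 / (3 * ρ) = 1 / ρ / 3 := by ring
    rw [h] at hz1; exact hz1
  set s := Real.sqrt ρ with hs_def
  set r := Real.sqrt (1 / ρ) with hr_def
  set q := Real.sqrt (1 - 1 / ρ) with hq_def
  set a := Real.sqrt (t - z) with ha_def
  set b := Real.sqrt (1 - t) with hb_def
  set c := Real.sqrt z with hc_def
  set w := Real.sqrt (1 / ρ - z) with hw_def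
  have hs2 : s ^ 2 = ρ := Real.sq_sqrt hρ0.le
  have hr2 : r ^ 2 = 1 / ρ := Real.sq_sqrt hinv0.le
  have hq2 : q ^ 2 = 1 - 1 / ρ := Real.sq_sqrt (by linarith)
  have ha2 : a ^ 2 = t - z := Real.sq_sqrt (by linarith)
  have hb2 : b ^ 2 = 1 - t := Real.sq_sqrt (by linarith)
  have hc2 : c ^ 2 = z := Real.sq_sqrt hz0
  have hw2 : w ^ 2 = 1 / ρ - z := Real.sq_sqrt (by linarith)
  have hs0 : 0 < s := Real.sqrt_pos.mpr hρ0
  have hr0 : 0 < r := Real.sqrt_pos.mpr hinv0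
  have hq0 : 0 < q := Real.sqrt_pos.mpr (by linarith)
  have ha0 : 0 ≤ a := Real.sqrt_nonneg _
  have hb0 : 0 ≤ b := Real.sqrt_nonneg _
  have hc0 : 0 ≤ c := Real.sqrt_nonneg _
  have hw0 : 0 ≤ w := Real.sqrt_nonneg _
  have hrs : r * s = 1 := by
    rw [hr_def, hs_def, ← Real.sqrt_mul (by positivity)]
    rw [one_div_mul_cancel (ne_of_gt hρ0), Real.sqrt_one]
  -- a*b ≥ w*q
  have hab : w * q ≤ a * b := by
    apply aux_sq_le (mul_nonneg hw0 hq0.le) (mul_nonneg ha0 hb0)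
    have e1 : (w * q) ^ 2 = (1 / ρ - z) * (1 - 1 / ρ) := by rw [mul_pow, hw2, hq2]
    have e2 : (a * b) ^ 2 = (t - z) * (1 - t) := by rw [mul_pow, ha2, hb2]
    rw [e1, e2]
    exact prod_ineq ht1 htz hinv
  -- a + b ≥ w + q
  have habs : w + q ≤ a + b := by
    apply aux_sq_le (add_nonneg hw0 hq0.le) (add_nonneg ha0 hb0)
    linarith [ha2, hb2, hw2, hq2, hab]
  -- positivity of denominators
  have hD1 : 0 < 2 * (a + b + c) := by linarith
  have hD2 : 0 < 2 * (r + q) := by positivity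
  rw [div_le_div_iff₀ hD1 hD2]
  have h3r : 3 / s = 3 * r := by
    field_simp
    linear_combination -hrs
  rw [h3r, ← hc2]
  have hmain := key_ineq s r q a b c w hs0 hr0 hq0 ha0 hb0 hc0 hw0 hrs
    (by linarith) (by linarith) (by linarith) (by linarith) (by linarith) habs
  linarith [hmain]
end

section
/- Let ρ, t, z be real numbers satisfying 1 ≤ ρ ≤ 2, z ≥ max(0, 2t − 1), 0 ≤ z ≤ 1/(3ρ), and 1/ρ ≤ t ≤ 0.5 + 0.5·z. Then (3/√ρ + √ρ + 1.5·√ρ·z) / (2·(√z + √(t − z) + √(1 − t))) ≤ 0.75·√(ρ/2) + √(1/(2ρ)). -/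
private theorem le_of_sq_le_sq' (X Y : ℝ) (h : X^2 ≤ Y^2) (hY : 0 ≤ Y) : X ≤ Y := by
  nlinarith [h, hY]

set_option maxHeartbeats 1000000 in
private theorem key_ineq_s13 (r b c d s : ℝ) (hb : 0 ≤ b) (hc : 0 ≤ c) (hd : 0 ≤ d)
    (hr1 : 5/3 ≤ r) (hr2 : r ≤ 2) (hs : s^2 = 2) (hs0 : 0 < s)
    (hsum : b^2 + c^2 + d^2 = 1) (hcd : c ≤ d)
    (hzb : 3*r*b^2 ≤ 1) (hrt : 1 ≤ r*(b^2+c^2)) :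
    s * (3 + r + 1.5 * r * b^2) ≤ (b+c+d) * (1.5*r + 2) := by
  have hr0 : (0:ℝ) < r := by linarith
  have hB0 : (0:ℝ) < 12+13*r+3*r^2 := by nlinarith
  have hA0 : (0:ℝ) ≤ 16+42*r+16.5*r^2 := by nlinarith
  have h6 : (16+42*r+16.5*r^2)^2 ≤ 6*r*(12+13*r+3*r^2)^2 := by
    nlinarith [mul_nonneg (sub_nonneg.2 hr1) (sub_nonneg.2 hr2), sq_nonneg (r-2)]
  have hW : b*(16+42*r+16.5*r^2) ≤ s*(12+13*r+3*r^2) := by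
    refine le_of_sq_le_sq' _ _ ?_ (mul_nonneg hs0.le hB0.le)
    have h7 := mul_le_mul_of_nonneg_left h6 (sq_nonneg b)
    have h8 := mul_le_mul_of_nonneg_left hzb
      (by positivity : (0:ℝ) ≤ 2*(12+13*r+3*r^2)^2)
    have h9 : (s*(12+13*r+3*r^2))^2 = 2*(12+13*r+3*r^2)^2 := by
      rw [mul_pow, hs]
    calc (b*(16+42*r+16.5*r^2))^2 = b^2*(16+42*r+16.5*r^2)^2 := by ring
      _ ≤ b^2*(6*r*(12+13*r+3*r^2)^2) := h7
      _ = 2*(12+13*r+3*r^2)^2*(3*r*b^2) := by ring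
      _ ≤ 2*(12+13*r+3*r^2)^2*1 := h8
      _ = (s*(12+13*r+3*r^2))^2 := by rw [h9]; ring
  have hident : (r+2-3*r*b^2)*(1.5*r+2)^2 - (s*(3+r) - b*(1.5*r+2-1.5*s*r*b))^2 * r
      = (2-r)*(16+4*r-r^2)/4 + b*r*(s*(12+13*r+3*r^2) - b*(16+42*r+16.5*r^2))
        + 1.5*r^2*b^2*(r-3*r*b^2) + s*b^3*r^2*(6+4.5*r) := by
    linear_combination (-(9*r+6*r^2+9*r^2*b^2+r^3+3*r^3*b^2+9/4*r^3*b^4)) * hs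
  have hN4 : (0:ℝ) ≤ (2-r)*(16+4*r-r^2)/4 :=
    div_nonneg (mul_nonneg (by linarith) (by nlinarith)) (by norm_num)
  have hN1 : (0:ℝ) ≤ b*r*(s*(12+13*r+3*r^2) - b*(16+42*r+16.5*r^2)) :=
    mul_nonneg (mul_nonneg hb hr0.le) (sub_nonneg.2 hW)
  have hN2 : (0:ℝ) ≤ 1.5*r^2*b^2*(r-3*r*b^2) := by
    have h : (0:ℝ) ≤ r - 3*r*b^2 := by linarith
    positivity
  have hN3 : (0:ℝ) ≤ s*b^3*r^2*(6+4.5*r) := by positivity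
  have hP : (s*(3+r) - b*(1.5*r+2-1.5*s*r*b))^2 * r ≤ (r+2-3*r*b^2)*(1.5*r+2)^2 := by
    linarith [hident, hN1, hN2, hN3, hN4]
  have h1 : r + 2 - 3*r*b^2 ≤ r*(c+d)^2 := by
    nlinarith [mul_nonneg (mul_nonneg hr0.le hc) (sub_nonneg.2 hcd), hrt]
  have hL0 : (0:ℝ) < 1.5*r+2 := by linarith
  have he0 : 0 ≤ (c+d)*(1.5*r+2) := mul_nonneg (by linarith) hL0.le
  have h2 : (r+2-3*r*b^2)*(1.5*r+2)^2 ≤ ((c+d)*(1.5*r+2))^2 * r := by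
    calc (r+2-3*r*b^2)*(1.5*r+2)^2 ≤ (r*(c+d)^2)*(1.5*r+2)^2 :=
          mul_le_mul_of_nonneg_right h1 (sq_nonneg _)
      _ = ((c+d)*(1.5*r+2))^2 * r := by ring
  have hsq : (s*(3+r) - b*(1.5*r+2-1.5*s*r*b))^2 ≤ ((c+d)*(1.5*r+2))^2 :=
    le_of_mul_le_mul_right (hP.trans h2) hr0
  have hfin := le_of_sq_le_sq' _ _ hsq he0
  linarith [hfin]

set_option maxHeartbeats 1000000 in
theorem case2_bound_rho_le_two
    (ρ t z : ℝ)
    (hρ1 : 1 ≤ ρ) (hρ2 : ρ ≤ 2)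
    (hz1 : z ≥ max 0 (2 * t - 1))
    (hz0 : 0 ≤ z) (hz2 : z ≤ 1 / (3 * ρ))
    (ht1 : 1 / ρ ≤ t) (ht2 : t ≤ 0.5 + 0.5 * z) :
    (3 / Real.sqrt ρ + Real.sqrt ρ + 1.5 * Real.sqrt ρ * z)
      / (2 * (Real.sqrt z + Real.sqrt (t - z) + Real.sqrt (1 - t)))
      ≤ 0.75 * Real.sqrt (ρ / 2) + Real.sqrt (1 / (2 * ρ)) := by
  have hρ0 : (0:ℝ) < ρ := by linarith
  have hz2' : 3 * ρ * z ≤ 1 := by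
    have := (le_div_iff₀ (by positivity : (0:ℝ) < 3 * ρ)).1 hz2
    linarith
  have htρ : 1 ≤ t * ρ := (div_le_iff₀ hρ0).1 ht1
  have hρ53 : 5/3 ≤ ρ := by nlinarith [htρ, ht2, hz2', hρ0]
  have htz0 : 0 < t - z := by nlinarith [htρ, hz2', hρ0]
  have hzt : z ≤ 1/3 := by nlinarith [hz2', hρ1]
  have ht3 : t ≤ 2/3 := by linarith
  have h21 : 2 * t - 1 ≤ z := le_trans (le_max_right _ _) hz1
  set a := Real.sqrt ρ with ha
  set b := Real.sqrt z with hbd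
  set c := Real.sqrt (t - z) with hcd'
  set d := Real.sqrt (1 - t) with hdd
  have ha2 : a^2 = ρ := Real.sq_sqrt hρ0.le
  have hb2 : b^2 = z := Real.sq_sqrt hz0
  have hc2 : c^2 = t - z := Real.sq_sqrt htz0.le
  have hd2 : d^2 = 1 - t := Real.sq_sqrt (by linarith)
  have ha0 : 0 < a := Real.sqrt_pos.2 hρ0
  have hb0 : 0 ≤ b := Real.sqrt_nonneg _
  have hc0 : 0 < c := Real.sqrt_pos.2 htz0
  have hd0 : 0 ≤ d := Real.sqrt_nonneg _
  have hs0 : (0:ℝ) < Real.sqrt 2 := Real.sqrt_pos.2 (by norm_num)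
  have hs2 : (Real.sqrt 2)^2 = 2 := Real.sq_sqrt (by norm_num)
  have hcd : c ≤ d := Real.sqrt_le_sqrt (by linarith)
  have hsum : b^2 + c^2 + d^2 = 1 := by rw [hb2, hc2, hd2]; ring
  have K := key_ineq_s13 ρ b c d (Real.sqrt 2) hb0 hc0.le hd0 hρ53 hρ2 hs2 hs0 hsum hcd
    (by rw [hb2]; linarith) (by rw [hb2, hc2]; nlinarith [htρ])
  have hr1 : Real.sqrt (ρ / 2) = a / Real.sqrt 2 := Real.sqrt_div hρ0.le 2
  have hr2' : Real.sqrt (1 / (2 * ρ)) = 1 / (Real.sqrt 2 * a) := by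
    rw [one_div, Real.sqrt_inv, Real.sqrt_mul (by norm_num : (0:ℝ) ≤ 2), one_div]
  rw [hr1, hr2']
  have hden : (0:ℝ) < 2 * (b + c + d) := by linarith
  rw [div_le_iff₀ hden]
  have hsa : (0:ℝ) < Real.sqrt 2 * a := by positivity
  have e1 : 3 / a + a + 1.5 * a * z = (3 + ρ + 1.5 * ρ * b^2) / a := by
    rw [hb2, ← ha2]; field_simp
  have e2 : (0.75 * (a / Real.sqrt 2) + 1 / (Real.sqrt 2 * a)) * (2 * (b + c + d))
      = (b + c + d) * (1.5 * ρ + 2) / (Real.sqrt 2 * a) := by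
    rw [← ha2]; field_simp; ring
  rw [e1, e2, div_le_div_iff₀ ha0 hsa]
  linarith [mul_le_mul_of_nonneg_right K ha0.le]
end

section
/- Let ρ, t, z be real numbers satisfying ρ ≥ 3, 1/(3ρ) ≤ t ≤ 1/ρ, and 0 ≤ z ≤ ρ·t²/3. Then (√ρ + t·√ρ + 2/√ρ + 1.5·z/(t·√ρ)) / (2·(√z + √(t − z)) + √ρ·(1 − t) + 1/√ρ) ≤ 1.2. -/
private lemma l_x1 (x : ℝ) (hx0 : 0 ≤ x) (h : x ^ 2 ≤ 1) : x ≤ 1 := by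
  nlinarith [sq_nonneg (x - 1)]

private lemma l_q (ρ x : ℝ) (hρ : ρ ≥ 3) (hx1 : x ≤ 1) (hx2 : 1 / 3 ≤ x) :
    2.2 * x ^ 2 + 0.8 ≤ 2.4 * x + 0.2 * ρ := by
  nlinarith [mul_nonneg (sub_nonneg.2 hx1) (by linarith : (0:ℝ) ≤ 11 * x - 1)]

private lemma l_A (c u v w : ℝ) (hc0 : 0 < c) (hu0 : 0 < u) (hv0 : 0 ≤ v) (hw0 : 0 ≤ w)
    (hvw : u ^ 2 - v ^ 2 = w ^ 2) (hwu : c * w ≤ u) : c * u ≤ c * v + w := by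
  nlinarith [mul_nonneg hw0 (sub_nonneg.2 hwu), mul_nonneg hw0 hv0,
    mul_pos hu0 hu0, mul_nonneg hu0.le hv0]

private lemma l_G (ρ t s u v w c : ℝ)
    (ht0 : 0 < t) (hs0 : 0 < s) (hc17 : 1.7 ≤ c) (hw0 : 0 ≤ w)
    (hsu2 : (s * u) ^ 2 = ρ * t)
    (hq : 2.2 * (ρ * t) + 0.8 ≤ 2.4 * (s * u) + 0.2 * ρ)
    (hA : c * u ≤ c * v + w) (hwts : c * w ≤ t * s) :
    2.2 * ρ * t ^ 2 + 0.8 * t + 1.5 * w ^ 2 ≤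
      2.4 * (t * s) * w + 2.4 * (t * s) * v + 0.2 * ρ * t := by
  have hc0 : (0:ℝ) < c := by linarith
  have hts0 : (0:ℝ) < t * s := mul_pos ht0 hs0
  have hP1 : (2.2 * (ρ * t) + 0.8) * t ≤ (2.4 * (s * u) + 0.2 * ρ) * t :=
    mul_le_mul_of_nonneg_right hq ht0.le
  have hcP1 : c * ((2.2 * (ρ * t) + 0.8) * t) ≤ c * ((2.4 * (s * u) + 0.2 * ρ) * t) :=
    mul_le_mul_of_nonneg_left hP1 hc0.le
  have hP2 : (t * s) * (c * u) ≤ (t * s) * (c * v + w) :=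
    mul_le_mul_of_nonneg_left hA hts0.le
  have hP3 : (c * w) * w ≤ (t * s) * w := mul_le_mul_of_nonneg_right hwts hw0
  have htsw : (0:ℝ) ≤ t * s * w := mul_nonneg hts0.le hw0
  have hslack : (0:ℝ) ≤ (2.4 * c - 3.9) * (t * s * w) :=
    mul_nonneg (by linarith) htsw
  have h1 : c * (2.2 * ρ * t ^ 2 + 0.8 * t + 1.5 * w ^ 2) ≤
      c * (2.4 * (t * s) * w + 2.4 * (t * s) * v + 0.2 * ρ * t) := by
    nlinarith [hcP1, hP2, hP3, hslack]
  exact le_of_mul_le_mul_left h1 hc0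

theorem case5_bound
    (ρ t z : ℝ)
    (hρ : ρ ≥ 3)
    (ht1 : 1 / (3 * ρ) ≤ t) (ht2 : t ≤ 1 / ρ)
    (hz1 : 0 ≤ z) (hz2 : z ≤ ρ * t ^ 2 / 3) :
    (Real.sqrt ρ + t * Real.sqrt ρ + 2 / Real.sqrt ρ + 1.5 * z / (t * Real.sqrt ρ))
      / (2 * (Real.sqrt z + Real.sqrt (t - z)) + Real.sqrt ρ * (1 - t) + 1 / Real.sqrt ρ)
      ≤ 1.2 := by
  have hρ0 : (0:ℝ) < ρ := by linarith
  have ht0 : 0 < t := lt_of_lt_of_le (by positivity) ht1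
  have hρt : ρ * t ≤ 1 := by
    rw [le_div_iff₀ hρ0] at ht2; linarith
  have h3ρt : 1 ≤ 3 * ρ * t := by
    rw [div_le_iff₀ (by linarith : (0:ℝ) < 3 * ρ)] at ht1; linarith
  have hz3 : 3 * z ≤ t := by nlinarith
  have htz : 0 ≤ t - z := by linarith
  set s := Real.sqrt ρ with hs_def
  set u := Real.sqrt t with hu_def
  set w := Real.sqrt z with hw_def
  set v := Real.sqrt (t - z) with hv_def
  have hs0 : 0 < s := Real.sqrt_pos.mpr hρ0
  have hs2 : s ^ 2 = ρ := Real.sq_sqrt hρ0.le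
  have hu0 : 0 < u := Real.sqrt_pos.mpr ht0
  have hu2 : u ^ 2 = t := Real.sq_sqrt ht0.le
  have hw0 : 0 ≤ w := Real.sqrt_nonneg z
  have hw2 : w ^ 2 = z := Real.sq_sqrt hz1
  have hv0 : 0 ≤ v := Real.sqrt_nonneg _
  have hv2 : v ^ 2 = t - z := Real.sq_sqrt htz
  set c := Real.sqrt 3 with hc_def
  have hc0 : (0:ℝ) < c := Real.sqrt_pos.mpr (by norm_num)
  have hc17 : (1.7:ℝ) ≤ c := by
    have h := Real.sqrt_le_sqrt (show (1.7:ℝ)^2 ≤ 3 by norm_num)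
    rwa [Real.sqrt_sq (by norm_num : (0:ℝ) ≤ 1.7)] at h
  have hwu : c * w ≤ u := by
    have h := Real.sqrt_le_sqrt hz3
    rwa [Real.sqrt_mul (by norm_num : (0:ℝ) ≤ 3), ← hw_def, ← hu_def, ← hc_def] at h
  have hwts : c * w ≤ t * s := by
    have h3z : 3 * z ≤ ρ * t ^ 2 := by linarith
    have h := Real.sqrt_le_sqrt h3z
    rw [Real.sqrt_mul (by norm_num : (0:ℝ) ≤ 3), Real.sqrt_mul hρ0.le,
      Real.sqrt_sq ht0.le] at h
    calc c * w ≤ Real.sqrt ρ * t := h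
      _ = t * s := by rw [mul_comm]
  have hA : c * u ≤ c * v + w :=
    l_A c u v w hc0 hu0 hv0 hw0 (by rw [hu2, hv2, hw2]; ring) hwu
  have hsu2 : (s * u) ^ 2 = ρ * t := by rw [mul_pow, hs2, hu2]
  have hsu0 : 0 < s * u := mul_pos hs0 hu0
  have hx1 : s * u ≤ 1 := l_x1 _ hsu0.le (by rw [hsu2]; exact hρt)
  have hx2 : 1 / 3 ≤ s * u := by
    have h := mul_nonneg hsu0.le (sub_nonneg.2 hx1)
    nlinarith [h, hsu2, h3ρt]
  have hq : 2.2 * (ρ * t) + 0.8 ≤ 2.4 * (s * u) + 0.2 * ρ := by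
    have := l_q ρ (s * u) hρ hx1 hx2
    rwa [hsu2] at this
  have hG := l_G ρ t s u v w c ht0 hs0 hc17 hw0 hsu2 hq hA hwts
  -- denominator positivity
  have ht13 : t ≤ 1 / 3 := by nlinarith
  have hD : 0 < 2 * (w + v) + s * (1 - t) + 1 / s := by
    have h1 : 0 ≤ s * (1 - t) := mul_nonneg hs0.le (by linarith)
    have h1s : 0 < 1 / s := by positivity
    linarith
  rw [div_le_iff₀ hD]
  have hts0 : 0 < t * s := mul_pos ht0 hs0
  have hsne : s ≠ 0 := hs0.ne'
  have htne : t ≠ 0 := ht0.ne'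
  have e1 : (s + t * s + 2 / s + 1.5 * z / (t * s)) * (t * s)
      = ρ * t + ρ * t ^ 2 + 2 * t + 1.5 * z := by
    rw [← hs2]; field_simp
  have e2 : (1.2 * (2 * (w + v) + s * (1 - t) + 1 / s)) * (t * s)
      = 1.2 * (2 * (t * s) * (w + v) + ρ * t * (1 - t) + t) := by
    rw [← hs2]; field_simp
  have h2 : (s + t * s + 2 / s + 1.5 * z / (t * s)) * (t * s)
      ≤ (1.2 * (2 * (w + v) + s * (1 - t) + 1 / s)) * (t * s) := by
    rw [e1, e2]; linarith [hG, hw2]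
  exact le_of_mul_le_mul_right h2 hts0
end

section
/- Let ρ and z be real numbers satisfying ρ ≥ 1, 0 ≤ z ≤ 1/(3ρ), and z ≤ 1 − 1/ρ. Then ((1 − z)·√ρ + 1/√ρ + (5.5/3)·z·√ρ) / ((1 − z)·√ρ + 1/√ρ + 2·z·√ρ/√3) ≤ 1.2. -/
theorem case7_forced_bound
    (ρ z : ℝ)
    (hρ : ρ ≥ 1)
    (hz0 : 0 ≤ z) (hz1 : z ≤ 1 / (3 * ρ)) (hz2 : z ≤ 1 - 1 / ρ) :
    ((1 - z) * Real.sqrt ρ + 1 / Real.sqrt ρ + (5.5 / 3) * z * Real.sqrt ρ)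
      / ((1 - z) * Real.sqrt ρ + 1 / Real.sqrt ρ + 2 * z * Real.sqrt ρ / Real.sqrt 3)
      ≤ 1.2 := by
  set s := Real.sqrt ρ with hs
  have hρ0 : (0:ℝ) < ρ := by linarith
  have hs1 : (1:ℝ) ≤ s := Real.one_le_sqrt.mpr hρ
  have hs0 : (0:ℝ) < s := by linarith
  have hssq : s * s = ρ := Real.mul_self_sqrt (le_of_lt hρ0)
  have hz1' : z ≤ 1 := by
    have : 1 / ρ > 0 := by positivity
    linarith
  have hzs : z * s ≤ (1 / s) / 3 := by
    have h1 : z * s * s ≤ 1 / 3 := by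
      have : z ≤ 1 / (3 * ρ) := hz1
      calc z * s * s = z * ρ := by rw [mul_assoc, hssq]
        _ ≤ (1 / (3 * ρ)) * ρ := by
            apply mul_le_mul_of_nonneg_right hz1 (le_of_lt hρ0)
        _ = 1 / 3 := by field_simp
    rw [div_div, le_div_iff₀ (by positivity : (0:ℝ) < s * 3)]
    nlinarith
  have hzs0 : 0 ≤ z * s := by positivity
  have h1zs : 0 ≤ (1 - z) * s := by nlinarith
  have hu0 : (0:ℝ) < 1 / s := by positivity
  have ht0 : (0:ℝ) < Real.sqrt 3 := Real.sqrt_pos.mpr (by norm_num)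
  have ht : Real.sqrt 3 ≤ 1.7321 := by
    nlinarith [Real.sq_sqrt (by norm_num : (0:ℝ) ≤ 3), Real.sqrt_nonneg 3]
  have hD : 0 < (1 - z) * s + 1 / s + 2 * z * s / Real.sqrt 3 := by
    have : 0 ≤ 2 * z * s / Real.sqrt 3 := by positivity
    linarith
  rw [div_le_iff₀ hD]
  have key : 2 * z * s / (1.7321 : ℝ) ≤ 2 * z * s / Real.sqrt 3 := by
    gcongr
  have : (1 - z) * s + 1 / s + (5.5 / 3) * z * s
      ≤ 1.2 * ((1 - z) * s + 1 / s + 2 * z * s / (1.7321 : ℝ)) := by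
    have he : 2 * z * s / (1.7321 : ℝ) = 20000 / 17321 * (z * s) := by
      norm_num; ring
    rw [he]
    linarith
  calc (1 - z) * s + 1 / s + (5.5 / 3) * z * s
      ≤ 1.2 * ((1 - z) * s + 1 / s + 2 * z * s / (1.7321 : ℝ)) := this
    _ ≤ 1.2 * ((1 - z) * s + 1 / s + 2 * z * s / Real.sqrt 3) := by linarith
end

section
/- Let ρ, t, z be real numbers satisfying ρ ≥ 1, 1 − 1/ρ ≤ t ≤ 1/ρ, 1/(3ρ) ≤ t, t ≤ 0.5 + 0.5·z, and 0 ≤ z ≤ ρ·t²/3. Then √ρ + 2/√ρ + z/(2·t·√ρ) ≤ 2.4·(√(1 − t) + √(t − z) + z/(t·√(3ρ))), i.e. the ratio (√ρ + 2/√ρ + z/(2t√ρ)) / (2·(√(1 − t) + √(t − z) + z/(t·√(3ρ)))) is at most 1.2. -/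
/-! The three terms are bounded separately. On the admissible region `1 ≤ ρ ≤ 2`, so
`√ρ + 2/√ρ ≤ 3` because `(√ρ - 1)(√ρ - 2) ≤ 0`; moreover `1/4 ≤ t ≤ 3/5` and `z ≤ t/3`, which
keeps `√(1 - t) + √(t - z)` above `5/4`, and `2.4 · 5/4 = 3`. The remaining term is
`z/(2t√ρ) = (√3/2) · z/(t√(3ρ))`, and `√3/2 ≤ 2.4`. -/

open Real

lemma sqrt_add_two_div_sqrt_le_three {ρ : ℝ} (h₁ : 1 ≤ ρ) (h₄ : ρ ≤ 4) :
    √ρ + 2 / √ρ ≤ 3 := by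
  have hs₁ : 1 ≤ √ρ := one_le_sqrt.mpr h₁
  have hs₂ : √ρ ≤ 2 := sqrt_le_iff.mpr ⟨by norm_num, by linarith⟩
  have h2 : 2 / √ρ ≤ 3 - √ρ := by
    rw [div_le_iff₀ (by positivity)]
    nlinarith
  linarith

lemma five_div_four_le_sqrt_add_sqrt {t z : ℝ} (ht₁ : 1 / 4 ≤ t) (ht₂ : t ≤ 3 / 5)
    (hz₁ : 0 ≤ z) (hz₂ : z ≤ t / 3) : 5 / 4 ≤ √(1 - t) + √(t - z) := by
  have hprod : (9 / 16 + z) / 2 ≤ √(1 - t) * √(t - z) := by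
    rw [← sqrt_mul (by linarith)]
    apply le_sqrt_of_sq_le
    nlinarith [mul_nonneg (sub_nonneg.mpr ht₁) (sub_nonneg.mpr ht₂),
      mul_nonneg (sub_nonneg.mpr hz₂) (show (0 : ℝ) ≤ 1 - t by linarith),
      mul_nonneg (sub_nonneg.mpr hz₂) (show (0 : ℝ) ≤ t / 3 + z by linarith)]
  have ha := sq_sqrt (show 0 ≤ 1 - t by linarith)
  have hb := sq_sqrt (show 0 ≤ t - z by linarith)
  nlinarith [sqrt_nonneg (1 - t), sqrt_nonneg (t - z)]

lemma div_two_mul_mul_sqrt_le {ρ t z : ℝ} (ht : 0 ≤ t) (hz : 0 ≤ z) :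
    z / (2 * t * √ρ) ≤ 2.4 * (z / (t * √(3 * ρ))) := by
  have hX : 0 ≤ z / (t * √ρ) := by positivity
  have hs3 : √3 ≤ 2 := sqrt_le_iff.mpr ⟨by norm_num, by norm_num⟩
  calc z / (2 * t * √ρ) = z / (t * √ρ) / 2 := by ring
    _ ≤ z / (t * √ρ) / √3 := div_le_div_of_nonneg_left hX (by positivity) hs3
    _ ≤ 2.4 * (z / (t * √ρ) / √3) := le_mul_of_one_le_left (by positivity) (by norm_num)
    _ = 2.4 * (z / (t * √(3 * ρ))) := by rw [sqrt_mul (by norm_num)]; ring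

lemma le_two_and_one_div_four_le {ρ t : ℝ} (hρ : 1 ≤ ρ) (ht₁ : 1 - 1 / ρ ≤ t)
    (ht₂ : t ≤ 1 / ρ) (ht₃ : 1 / (3 * ρ) ≤ t) : ρ ≤ 2 ∧ 1 / 4 ≤ t := by
  have hu : 0 < 1 / ρ := by positivity
  have hu' : 1 / (3 * ρ) = 1 / ρ / 3 := by ring
  have hρu : ρ * (1 / ρ) = 1 := by field_simp
  constructor <;> nlinarith

theorem case8_bound
    (ρ t z : ℝ)
    (hρ : ρ ≥ 1)
    (ht1 : 1 - 1 / ρ ≤ t) (ht2 : t ≤ 1 / ρ)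
    (ht3 : 1 / (3 * ρ) ≤ t) (ht4 : t ≤ 0.5 + 0.5 * z)
    (hz1 : 0 ≤ z) (hz2 : z ≤ ρ * t ^ 2 / 3) :
    Real.sqrt ρ + 2 / Real.sqrt ρ + z / (2 * t * Real.sqrt ρ)
      ≤ 2.4 * (Real.sqrt (1 - t) + Real.sqrt (t - z) + z / (t * Real.sqrt (3 * ρ))) := by
  obtain ⟨hρ₂, ht₀⟩ := le_two_and_one_div_four_le hρ ht1 ht2 ht3
  have htρ : t * ρ ≤ 1 := (le_div_iff₀ (by linarith)).mp ht2
  have hzt : z ≤ t / 3 := by nlinarith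
  have ht₅ : t ≤ 3 / 5 := by linarith
  have hA := sqrt_add_two_div_sqrt_le_three hρ (by linarith)
  have hB := five_div_four_le_sqrt_add_sqrt ht₀ ht₅ hz1 hzt
  have hC := div_two_mul_mul_sqrt_le (ρ := ρ) (by linarith : 0 ≤ t) hz1
  linarith
end
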